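/- arXiv:2309.05462 — 7 statements merged into one kernel-verified Lean document; each statement's English description precedes it below -/
import Mathlib

section
/- Let Z be a profinite set and 𝔞 an abelian group. The map sending a measure ν ∈ M(Z,𝔞) to the group homomorphism C(Z,ℤ) → 𝔞, f ↦ ⟨ν,f⟩, is an isomorphism of abelian groups M(Z,𝔞) ≅ Hom_ℤ(C(Z,ℤ),𝔞). -/
open TopologicalSpace

open scoped Classical

/-- The additive group of `A`-valued measures on a topological space `Z`:
functions on clopen subsets satisfying `ν U = ν V + ν (U \ V)` for clopen `V ⊆ U`. -/
def MeasAdd (Z : Type*) [TopologicalSpace Z] (A : Type*) [AddCommGroup A] :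
    AddSubgroup (Clopens Z → A) where
  carrier := {ν | ∀ U V : Clopens Z, (V : Set Z) ⊆ (U : Set Z) → ν U = ν V + ν (U \ V)}
  add_mem' := by
    intro a b ha hb U V h
    simp only [Pi.add_apply, ha U V h, hb U V h]
    abel
  zero_mem' := by intro U V h; simp
  neg_mem' := by
    intro a ha U V h
    simp only [Pi.neg_apply, ha U V h]
    abel

set_option linter.unusedSectionVars false

section Aux
variable {Z : Type*} [TopologicalSpace Z] [CompactSpace Z]
variable {A : Type*} [AddCommGroup A]

/-- fiber of a continuous integer valued function, as a clopen set -/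
def fib (f : C(Z, ℤ)) (n : ℤ) : Clopens Z :=
  ⟨f ⁻¹' {n}, (isClopen_discrete _).preimage f.continuous⟩

@[simp] lemma mem_fib (f : C(Z, ℤ)) (n : ℤ) (z : Z) : z ∈ fib f n ↔ f z = n := Iff.rfl

/-- characteristic function of a clopen set -/
noncomputable def chi (U : Clopens Z) : C(Z, ℤ) :=
  ⟨fun z => if z ∈ (U : Set Z) then 1 else 0, by
    apply Continuous.if _ continuous_const continuous_const
    intro a ha
    rw [show {x | x ∈ (U : Set Z)} = (U : Set Z) from rfl, U.isClopen.frontier_eq] at ha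
    exact absurd ha (Set.notMem_empty a)⟩

@[simp] lemma chi_apply (U : Clopens Z) (z : Z) :
    chi U z = if z ∈ (U : Set Z) then 1 else 0 := rfl

noncomputable def rset (f : C(Z, ℤ)) : Finset ℤ :=
  ((isCompact_range f.continuous).finite DiscreteTopology.isDiscrete).toFinset

lemma mem_rset (f : C(Z, ℤ)) (z : Z) : f z ∈ rset f := by
  simp [rset, Set.Finite.mem_toFinset]

end Aux

section Aux2
variable {Z : Type*} [TopologicalSpace Z] [CompactSpace Z]
variable {A : Type*} [AddCommGroup A]

lemma meas_prop (ν : MeasAdd Z A) {U V : Clopens Z} (h : V ≤ U) :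
    ν.1 U = ν.1 V + ν.1 (U \ V) := ν.2 U V h

lemma meas_bot (ν : MeasAdd Z A) : ν.1 ⊥ = 0 := by
  have := meas_prop ν (le_refl (⊥ : Clopens Z))
  simpa using this

lemma meas_sup (ν : MeasAdd Z A) {V W : Clopens Z} (h : Disjoint V W) :
    ν.1 (V ⊔ W) = ν.1 V + ν.1 W := by
  have h1 : V ≤ V ⊔ W := le_sup_left
  have := meas_prop ν h1
  rw [h.sup_sdiff_cancel_left] at this
  rw [this, add_comm]

lemma meas_finset_sup (ν : MeasAdd Z A) {ι : Type*} (S : Finset ι) (c : ι → Clopens Z)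
    (hd : ∀ i ∈ S, ∀ j ∈ S, i ≠ j → Disjoint (c i) (c j)) :
    ν.1 (S.sup c) = ∑ i ∈ S, ν.1 (c i) := by
  induction S using Finset.cons_induction with
  | empty => simpa using meas_bot ν
  | cons a S haS ih =>
    rw [Finset.sup_cons, Finset.sum_cons, meas_sup ν, ih]
    · intro i hi j hj hij
      exact hd i (Finset.mem_cons_of_mem hi) j (Finset.mem_cons_of_mem hj) hij
    · rw [Finset.disjoint_sup_right]
      intro i hi
      exact hd a (Finset.mem_cons_self a S) i (Finset.mem_cons_of_mem hi)
        (fun h => haS (h ▸ hi))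

noncomputable def integ (ν : MeasAdd Z A) (f : C(Z, ℤ)) : A :=
  ∑ n ∈ rset f, (n • ν.1 (fib f n) : A)

lemma fib_eq_bot (f : C(Z, ℤ)) {n : ℤ} (h : n ∉ rset f) : fib f n = ⊥ := by
  apply SetLike.coe_injective
  ext z
  simp only [Clopens.coe_bot, Set.mem_empty_iff_false, iff_false]
  intro hz
  exact h (by rw [← show f z = n from hz]; exact mem_rset f z)

lemma integ_eq_sum (ν : MeasAdd Z A) (f : C(Z, ℤ)) (T : Finset ℤ) (hT : rset f ⊆ T) :
    integ ν f = ∑ n ∈ T, (n • ν.1 (fib f n) : A) := by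
  rw [integ]
  apply Finset.sum_subset hT
  intro n _ hn
  rw [fib_eq_bot f hn, meas_bot, smul_zero]

end Aux2

section Aux3
variable {Z : Type*} [TopologicalSpace Z] [CompactSpace Z]
variable {A : Type*} [AddCommGroup A]

lemma clopens_disjoint {U V : Clopens Z} (h : ∀ z, z ∈ U → z ∈ V → False) : Disjoint U V := by
  rw [disjoint_iff]
  apply SetLike.coe_injective
  ext z
  simp only [Clopens.coe_inf, Set.mem_inter_iff, Clopens.coe_bot, Set.mem_empty_iff_false,
    iff_false, not_and]
  exact fun h1 h2 => h z h1 h2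

lemma integ_partition (ν : MeasAdd Z A) (f : C(Z, ℤ)) {ι : Type*} (S : Finset ι)
    (c : ι → Clopens Z) (v : ι → ℤ)
    (hd : ∀ i ∈ S, ∀ j ∈ S, i ≠ j → Disjoint (c i) (c j))
    (htop : S.sup c = ⊤)
    (hf : ∀ i ∈ S, ∀ z, z ∈ c i → f z = v i) :
    integ ν f = ∑ i ∈ S, (v i • ν.1 (c i) : A) := by
  have key : ∀ n : ℤ, ν.1 (fib f n) = ∑ i ∈ S, ν.1 (fib f n ⊓ c i) := by
    intro n
    have h1 : fib f n = S.sup (fun i => fib f n ⊓ c i) := by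
      rw [← Finset.sup_inf_distrib_left, htop, inf_top_eq]
    conv_lhs => rw [h1]
    apply meas_finset_sup
    intro i hi j hj hij
    exact (hd i hi j hj hij).mono inf_le_right inf_le_right
  rw [integ]
  calc ∑ n ∈ rset f, (n • ν.1 (fib f n) : A)
      = ∑ n ∈ rset f, ∑ i ∈ S, (n • ν.1 (fib f n ⊓ c i) : A) := by
        apply Finset.sum_congr rfl
        intro n _
        rw [key n, Finset.smul_sum]
    _ = ∑ i ∈ S, ∑ n ∈ rset f, (n • ν.1 (fib f n ⊓ c i) : A) := Finset.sum_comm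
    _ = ∑ i ∈ S, (v i • ν.1 (c i) : A) := by
        apply Finset.sum_congr rfl
        intro i hi
        have hterm : ∀ n ∈ rset f, (n • ν.1 (fib f n ⊓ c i) : A)
            = if n = v i then v i • ν.1 (c i) else 0 := by
          intro n _
          by_cases h : n = v i
          · subst h
            rw [if_pos rfl]
            congr 1
            rw [inf_eq_right.2 ?_]
            intro z hz
            exact hf i hi z hz
          · rw [if_neg h]
            have hbot : fib f n ⊓ c i = ⊥ :=
              disjoint_iff.1 (clopens_disjoint fun z h1 h2 => h (by rw [← h1]; exact hf i hi z h2))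
            rw [hbot, meas_bot, smul_zero]
        rw [Finset.sum_congr rfl hterm, Finset.sum_ite_eq' (rset f) (v i)
          (fun _ => (v i • ν.1 (c i) : A))]
        by_cases hv : v i ∈ rset f
        · rw [if_pos hv]
        · rw [if_neg hv]
          have : c i = ⊥ := by
            apply SetLike.coe_injective
            ext z
            simp only [Clopens.coe_bot, Set.mem_empty_iff_false, iff_false]
            intro hz
            exact hv ((hf i hi z hz) ▸ mem_rset f z)
          rw [this, meas_bot, smul_zero]

lemma fib_inf_mem (f g : C(Z, ℤ)) (z : Z) : z ∈ fib f (f z) ⊓ fib g (g z) := ⟨rfl, rfl⟩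

lemma integ_add (ν : MeasAdd Z A) (f g : C(Z, ℤ)) :
    integ ν (f + g) = integ ν f + integ ν g := by
  set S : Finset (ℤ × ℤ) := rset f ×ˢ rset g with hS
  set c : ℤ × ℤ → Clopens Z := fun p => fib f p.1 ⊓ fib g p.2 with hc
  have hd : ∀ p ∈ S, ∀ q ∈ S, p ≠ q → Disjoint (c p) (c q) := by
    intro p _ q _ hpq
    apply clopens_disjoint
    intro z hz1 hz2
    apply hpq
    obtain ⟨h1, h2⟩ := hz1
    obtain ⟨h3, h4⟩ := hz2
    exact Prod.ext (h1 ▸ h3 ▸ rfl) (h2 ▸ h4 ▸ rfl)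
  have htop : S.sup c = ⊤ := by
    apply le_antisymm le_top
    intro z _
    have hm : (f z, g z) ∈ S := Finset.mem_product.2 ⟨mem_rset f z, mem_rset g z⟩
    exact SetLike.le_def.1 (Finset.le_sup (f := c) hm) (fib_inf_mem f g z)
  have e1 := integ_partition ν (f + g) S c (fun p => p.1 + p.2) hd htop ?_
  have e2 := integ_partition ν f S c (fun p => p.1) hd htop ?_
  have e3 := integ_partition ν g S c (fun p => p.2) hd htop ?_
  · rw [e1, e2, e3, ← Finset.sum_add_distrib]
    apply Finset.sum_congr rfl
    intro p _
    rw [add_smul]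
  · intro p _ z hz
    exact hz.2
  · intro p _ z hz
    exact hz.1
  · intro p _ z hz
    simp only [ContinuousMap.add_apply]
    rw [hz.1, hz.2]

end Aux3

section Aux4
variable {Z : Type*} [TopologicalSpace Z] [CompactSpace Z]
variable {A : Type*} [AddCommGroup A]

lemma chi_sdiff (U V : Clopens Z) (h : V ≤ U) : chi U = chi V + chi (U \ V) := by
  ext z
  simp only [ContinuousMap.add_apply, chi_apply, Clopens.coe_sdiff, Set.mem_diff]
  by_cases h1 : z ∈ (V : Set Z)
  · rw [if_pos (show z ∈ (U : Set Z) from h h1), if_pos h1, if_neg (fun hc => hc.2 h1)]; simp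
  · by_cases h2 : z ∈ (U : Set Z) <;> simp [h1, h2]

lemma fib_chi_one (U : Clopens Z) : fib (chi U) 1 = U := by
  apply SetLike.coe_injective
  ext z
  simp only [fib, Clopens.coe_mk, Set.mem_preimage, Set.mem_singleton_iff, chi_apply]
  split_ifs with h
  · simpa using h
  · simpa using h

lemma integ_chi (ν : MeasAdd Z A) (U : Clopens Z) : integ ν (chi U) = ν.1 U := by
  rw [integ_eq_sum ν (chi U) ({0, 1} : Finset ℤ) ?_]
  · rw [Finset.sum_insert (by decide), Finset.sum_singleton, zero_smul, one_smul, zero_add,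
      fib_chi_one]
  · intro n hn
    simp only [rset, Set.Finite.mem_toFinset, Set.mem_range] at hn
    obtain ⟨z, hz⟩ := hn
    simp only [chi_apply] at hz
    simp only [Finset.mem_insert, Finset.mem_singleton]
    split_ifs at hz
    · right; exact hz.symm
    · left; exact hz.symm

lemma f_eq_sum_chi (f : C(Z, ℤ)) : f = ∑ n ∈ rset f, n • chi (fib f n) := by
  ext z
  rw [ContinuousMap.sum_apply]
  simp only [ContinuousMap.coe_smul, Pi.smul_apply, chi_apply, smul_eq_mul]
  have : ∀ n ∈ rset f, (n * if z ∈ (fib f n : Set Z) then 1 else 0 : ℤ)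
      = if n = f z then f z else 0 := by
    intro n _
    by_cases h : f z = n
    · rw [if_pos (show z ∈ (fib f n : Set Z) from h), if_pos h.symm, mul_one, h]
    · rw [if_neg (show z ∉ (fib f n : Set Z) from h), if_neg (fun hc => h hc.symm), mul_zero]
  rw [Finset.sum_congr rfl this, Finset.sum_ite_eq' (rset f) (f z) (fun _ => f z),
    if_pos (mem_rset f z)]

end Aux4

/-- For a profinite set `Z` and an abelian group `A`, integration gives an
isomorphism of abelian groups `M(Z, A) ≅ Hom_ℤ(C(Z, ℤ), A)`: there is an additive isomorphism
`Φ` sending a measure `ν` to the homomorphism `f ↦ ⟨ν, f⟩`; it is characterized by the fact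
that it sends `ν` to a homomorphism taking the characteristic function of a clopen subset `U`
to `ν U`. -/
theorem measures_equiv_hom_of_continuous_int_valued_functions
    (Z : Type*) [TopologicalSpace Z] [CompactSpace Z] [T2Space Z] [TotallyDisconnectedSpace Z]
    (A : Type*) [AddCommGroup A] :
    ∃ Φ : MeasAdd Z A ≃+ (C(Z, ℤ) →+ A),
      ∀ (ν : MeasAdd Z A) (U : Clopens Z) (f : C(Z, ℤ)),
        (∀ z : Z, f z = if z ∈ (U : Set Z) then 1 else 0) → Φ ν f = ν.1 U := by
  refine ⟨{
    toFun := fun ν => AddMonoidHom.mk' (integ ν) (integ_add ν)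
    invFun := fun φ => ⟨fun U => φ (chi U), fun U V h => by
      show φ (chi U) = φ (chi V) + φ (chi (U \ V))
      rw [chi_sdiff U V h, map_add]⟩
    left_inv := fun ν => by
      apply Subtype.ext
      funext U
      exact integ_chi ν U
    right_inv := fun φ => by
      ext f
      show integ _ f = φ f
      rw [integ]
      conv_rhs => rw [f_eq_sum_chi f]
      rw [map_sum]
      apply Finset.sum_congr rfl
      intro n _
      rw [map_zsmul]
    map_add' := fun ν ν' => by
      ext f
      show integ (ν + ν') f = integ ν f + integ ν' f
      rw [integ, integ, integ, ← Finset.sum_add_distrib]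
      apply Finset.sum_congr rfl
      intro n _
      rw [show (ν + ν').1 (fib f n) = ν.1 (fib f n) + ν'.1 (fib f n) from rfl, smul_add]
  }, ?_⟩
  intro ν U f hfc
  have hf : f = chi U := by ext z; exact hfc z
  subst hf
  exact integ_chi ν U
end

section
/- Let Z be a profinite set. For every short exact sequence 0 → 𝔞' → 𝔞 → 𝔞'' → 0 of abelian groups, the induced sequence 0 → M(Z,𝔞') → M(Z,𝔞) → M(Z,𝔞'') → 0, obtained by postcomposing measures with the given group homomorphisms, is a short exact sequence of abelian groups; that is, the functor 𝔞 ↦ M(Z,𝔞) is exact. -/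
open TopologicalSpace

theorem MeasAdd.apply_diff {Z : Type*} [TopologicalSpace Z] {A : Type*} [AddCommGroup A]
    (ν : MeasAdd Z A) (U V : Clopens Z) (h : (V : Set Z) ⊆ (U : Set Z)) :
    ν.1 U = ν.1 V + ν.1 (U \ V) := ν.2 U V h

/-- Pushforward of measures along a continuous map. -/
noncomputable def pushMeas {Z W : Type*} [TopologicalSpace Z] [TopologicalSpace W] {A : Type*}
    [AddCommGroup A] (f : Z → W) (hf : Continuous f) (ν : MeasAdd Z A) : MeasAdd W A :=
  ⟨fun U => ν.1 ⟨f ⁻¹' (U : Set W), U.isClopen.preimage hf⟩, by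
    intro U V h
    dsimp only
    have h2 := MeasAdd.apply_diff ν ⟨f ⁻¹' (U : Set W), U.isClopen.preimage hf⟩
      ⟨f ⁻¹' (V : Set W), V.isClopen.preimage hf⟩ (fun x hx => Set.preimage_mono h hx)
    rw [h2]
    congr 1⟩

/-- Postcomposition of a measure with a group homomorphism. -/
noncomputable def mapMeas {Z : Type*} [TopologicalSpace Z] {A B : Type*} [AddCommGroup A]
    [AddCommGroup B] (φ : A →+ B) (ν : MeasAdd Z A) : MeasAdd Z B :=
  ⟨fun U => φ (ν.1 U), by
    intro U V h
    dsimp only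
    rw [MeasAdd.apply_diff ν U V h, map_add]⟩

/-- The counting measure on a finite topological space. -/
noncomputable def countMeas (X : Type*) [TopologicalSpace X] [Finite X] : MeasAdd X ℤ :=
  ⟨fun U => ((U : Set X).ncard : ℤ), by
    intro U V h
    dsimp only
    have h2 : ((U : Set X) \ (V : Set X)).ncard + (V : Set X).ncard = (U : Set X).ncard :=
      Set.ncard_diff_add_ncard_of_subset h (Set.toFinite _)
    have h3 : ((U \ V : Clopens X) : Set X) = (U : Set X) \ (V : Set X) := rfl
    rw [h3]
    omega⟩

namespace MeasProof
open TopologicalSpace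
variable {Z : Type*} [TopologicalSpace Z] {A : Type*} [AddCommGroup A]

lemma apply_bot (ν : MeasAdd Z A) : ν.1 ⊥ = 0 := by
  have h := ν.2 ⊥ ⊥ subset_rfl
  rw [sdiff_self] at h
  exact left_eq_add.mp h

lemma coe_finsetSup {ι : Type*} (s : Finset ι) (P : ι → Clopens Z) :
    ((s.sup P : Clopens Z) : Set Z) = ⋃ i ∈ s, (P i : Set Z) := by
  classical
  induction s using Finset.induction_on with
  | empty => simp
  | @insert a s ha ih => rw [Finset.sup_insert]; simp [ih]

lemma disjoint_iff_coe {U V : Clopens Z} : Disjoint U V ↔ Disjoint (U : Set Z) (V : Set Z) := by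
  constructor
  · intro h
    rw [Set.disjoint_iff_inter_eq_empty]
    calc (U : Set Z) ∩ V = ((U ⊓ V : Clopens Z) : Set Z) := rfl
      _ = ∅ := by rw [disjoint_iff.mp h]; rfl
  · intro h
    rw [disjoint_iff]
    exact Clopens.ext (by
      rw [Clopens.coe_inf, Clopens.coe_bot, Set.disjoint_iff_inter_eq_empty.mp h])

lemma apply_finsetSup {ι : Type*} [DecidableEq ι] (ν : MeasAdd Z A) (s : Finset ι)
    (P : ι → Clopens Z) (hdisj : (s : Set ι).PairwiseDisjoint P) :
    ν.1 (s.sup P) = ∑ i ∈ s, ν.1 (P i) := by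
  induction s using Finset.induction_on with
  | empty => simpa using apply_bot ν
  | @insert a s ha ih =>
    have hd : Disjoint (P a) (s.sup P) := by
      rw [Finset.disjoint_sup_right]
      intro i hi
      exact hdisj (by simp) (by simp [hi]) (by rintro rfl; exact ha hi)
    rw [Finset.sup_insert, Finset.sum_insert ha, ← ih (hdisj.subset (by simp)),
      ν.2 (P a ⊔ s.sup P) (P a) (by rw [Clopens.coe_sup]; exact Set.subset_union_left),
      hd.sup_sdiff_cancel_left]

/-- The fiber of a locally constant function, as a clopen set. -/
def fiberClopen {Y : Type*} (f : LocallyConstant Z Y) (a : Y) : Clopens Z :=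
  ⟨f ⁻¹' {a}, f.isLocallyConstant.isClopen_fiber a⟩

lemma mem_fiberClopen {Y : Type*} {f : LocallyConstant Z Y} {a : Y} {x : Z} :
    x ∈ (fiberClopen f a : Set Z) ↔ f x = a := Iff.rfl

/-- Integration of a locally constant `ℤ`-valued function against a measure. -/
noncomputable def intg [CompactSpace Z] (ν : MeasAdd Z A) (f : LocallyConstant Z ℤ) : A :=
  ∑ a ∈ f.range_finite.toFinset, a • ν.1 (fiberClopen f a)

lemma intg_eq_sum [CompactSpace Z] (ν : MeasAdd Z A) (f : LocallyConstant Z ℤ)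
    {ι : Type*} [DecidableEq ι] (s : Finset ι) (P : ι → Clopens Z)
    (hdisj : (s : Set ι).PairwiseDisjoint P) (hcov : s.sup P = ⊤) (c : ι → ℤ)
    (hc : ∀ i ∈ s, ∀ x ∈ (P i : Set Z), f x = c i) :
    intg ν f = ∑ i ∈ s, c i • ν.1 (P i) := by
  classical
  set R := f.range_finite.toFinset with hR
  set s' := s.filter (fun i => P i ≠ ⊥) with hs'
  have hfib : ∀ a ∈ R, fiberClopen f a = (s'.filter (fun i => c i = a)).sup P := by
    intro a _
    apply Clopens.ext
    rw [coe_finsetSup]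
    ext x
    simp only [Set.mem_iUnion, Finset.mem_filter, hs', mem_fiberClopen, exists_prop]
    constructor
    · intro hx
      have hxU : x ∈ ((s.sup P : Clopens Z) : Set Z) := by rw [hcov]; trivial
      rw [coe_finsetSup] at hxU
      simp only [Set.mem_iUnion, exists_prop] at hxU
      obtain ⟨i, hi, hxi⟩ := hxU
      have hPi : P i ≠ ⊥ := by
        intro h; rw [h] at hxi; exact hxi
      exact ⟨i, ⟨⟨hi, hPi⟩, by rw [← hc i hi x hxi]; exact hx⟩, hxi⟩
    · rintro ⟨i, ⟨⟨hi, -⟩, hci⟩, hxi⟩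
      rw [← hci]
      exact hc i hi x hxi
  have key : ∀ a ∈ R, ν.1 (fiberClopen f a) = ∑ i ∈ s'.filter (fun i => c i = a), ν.1 (P i) := by
    intro a ha
    rw [hfib a ha]
    exact apply_finsetSup ν _ _ (hdisj.subset (by
      intro i hi
      simp only [Finset.coe_filter, hs', Set.mem_setOf_eq, Finset.mem_filter] at hi
      exact hi.1.1))
  calc intg ν f = ∑ a ∈ R, ∑ i ∈ s'.filter (fun i => c i = a), a • ν.1 (P i) := by
        refine Finset.sum_congr rfl fun a ha => ?_
        rw [key a ha, Finset.smul_sum]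
    _ = ∑ a ∈ R, ∑ i ∈ s'.filter (fun i => c i = a), c i • ν.1 (P i) := by
        refine Finset.sum_congr rfl fun a _ => Finset.sum_congr rfl fun i hi => ?_
        rw [(Finset.mem_filter.mp hi).2]
    _ = ∑ i ∈ s', c i • ν.1 (P i) := by
        refine Finset.sum_fiberwise_of_maps_to ?_ _
        intro i hi
        simp only [hs', Finset.mem_filter] at hi
        obtain ⟨hi1, hi2⟩ := hi
        have hne : ((P i : Set Z)).Nonempty := by
          rw [Set.nonempty_iff_ne_empty]
          intro h
          exact hi2 (Clopens.ext (by rw [h, Clopens.coe_bot]))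
        obtain ⟨x, hx⟩ := hne
        simp only [hR, Set.Finite.mem_toFinset]
        exact ⟨x, hc i hi1 x hx⟩
    _ = ∑ i ∈ s, c i • ν.1 (P i) := by
        refine Finset.sum_subset (Finset.filter_subset _ _) ?_
        intro i hi hni
        simp only [hs', Finset.mem_filter, not_and, not_not] at hni
        rw [hni hi, apply_bot ν, smul_zero]

lemma intg_add [CompactSpace Z] (ν : MeasAdd Z A) (f g : LocallyConstant Z ℤ) :
    intg ν (f + g) = intg ν f + intg ν g := by
  classical
  set p : LocallyConstant Z (ℤ × ℤ) :=
    ⟨fun x => (f x, g x), f.isLocallyConstant.prodMk g.isLocallyConstant⟩ with hp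
  set s := p.range_finite.toFinset with hs
  set P : ℤ × ℤ → Clopens Z := fun ab => fiberClopen p ab with hP
  have hdisj : (s : Set (ℤ × ℤ)).PairwiseDisjoint P := by
    intro a _ b _ hab
    simp only [Function.onFun]
    rw [disjoint_iff_coe, Set.disjoint_left]
    intro x hxa hxb
    exact hab ((mem_fiberClopen.mp hxa).symm.trans (mem_fiberClopen.mp hxb))
  have hcov : s.sup P = ⊤ := by
    apply Clopens.ext
    rw [coe_finsetSup, Clopens.coe_top]
    apply Set.eq_univ_of_forall
    intro x
    simp only [Set.mem_iUnion, exists_prop]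
    exact ⟨p x, by simp [hs, Set.Finite.mem_toFinset], mem_fiberClopen.mpr rfl⟩
  have h1 := intg_eq_sum ν (f + g) s P hdisj hcov (fun ab => ab.1 + ab.2) (by
    intro ab _ x hx
    have hx' : p x = ab := mem_fiberClopen.mp hx
    rw [LocallyConstant.add_apply, ← hx']
    rfl)
  have h2 := intg_eq_sum ν f s P hdisj hcov (fun ab => ab.1) (by
    intro ab _ x hx
    have hx' : p x = ab := mem_fiberClopen.mp hx
    rw [← hx']
    rfl)
  have h3 := intg_eq_sum ν g s P hdisj hcov (fun ab => ab.2) (by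
    intro ab _ x hx
    have hx' : p x = ab := mem_fiberClopen.mp hx
    rw [← hx']
    rfl)
  rw [h1, h2, h3, ← Finset.sum_add_distrib]
  exact Finset.sum_congr rfl fun ab _ => add_smul _ _ _

/- The indicator of a clopen set as a locally constant integer-valued function. -/
open scoped Classical in
noncomputable def indLC (U : Clopens Z) : LocallyConstant Z ℤ :=
  ⟨fun x => if x ∈ (U : Set Z) then 1 else 0, by
    intro t
    have : (fun x => if x ∈ (U : Set Z) then (1 : ℤ) else 0) ⁻¹' t =
        (if (1 : ℤ) ∈ t then (U : Set Z) else ∅) ∪ (if (0 : ℤ) ∈ t then (U : Set Z)ᶜ else ∅) := by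
      ext x
      by_cases hx : x ∈ (U : Set Z)
      · simp only [Set.mem_preimage, if_pos hx, Set.mem_union]
        by_cases h1 : (1 : ℤ) ∈ t <;> simp [h1, hx]
      · simp only [Set.mem_preimage, if_neg hx, Set.mem_union]
        by_cases h0 : (0 : ℤ) ∈ t <;> simp [h0, hx]
    rw [this]
    apply IsOpen.union <;> split_ifs <;>
      simp [U.isClopen.isOpen, U.isClopen.compl.isOpen]⟩

open scoped Classical in
lemma indLC_apply (U : Clopens Z) (x : Z) :
    indLC U x = if x ∈ (U : Set Z) then 1 else 0 := rfl

lemma indLC_diff (U V : Clopens Z) (h : (V : Set Z) ⊆ (U : Set Z)) :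
    indLC U = indLC V + indLC (U \ V) := by
  ext x
  rw [LocallyConstant.add_apply]
  simp only [indLC_apply, Clopens.coe_sdiff, Set.mem_diff]
  by_cases hV : x ∈ (V : Set Z)
  · have hU := h hV
    simp [hV, hU]
  · by_cases hU : x ∈ (U : Set Z) <;> simp [hV, hU]

lemma intg_indLC [CompactSpace Z] (ν : MeasAdd Z A) (U : Clopens Z) :
    intg ν (indLC U) = ν.1 U := by
  classical
  have hu : (Finset.univ : Finset Bool) = {true, false} := rfl
  have h := intg_eq_sum ν (indLC U) (Finset.univ : Finset Bool)
      (fun b => if b then U else Uᶜ) ?_ ?_ (fun b => if b then 1 else 0) ?_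
  · rw [h, Fintype.sum_bool]
    simp
  · intro a _ b _ hab
    match a, b with
    | true, true => exact absurd rfl hab
    | false, false => exact absurd rfl hab
    | true, false => simpa [Function.onFun] using disjoint_compl_right
    | false, true => simpa [Function.onFun] using disjoint_compl_left
  · rw [hu]
    simp [sup_compl_eq_top]
  · intro b _ x hx
    match b with
    | true =>
      have hx' : x ∈ (U : Set Z) := by simpa using hx
      simp [indLC_apply, hx']
    | false =>
      have hx' : x ∉ (U : Set Z) := by simpa using hx
      simp [indLC_apply, hx']

end MeasProof

/-- For a profinite set `Z`, the functor `A ↦ M(Z, A)` is exact: every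
short exact sequence `0 → A' → A → A'' → 0` of abelian groups induces a short exact
sequence `0 → M(Z, A') → M(Z, A) → M(Z, A'') → 0`. -/
theorem measures_functor_exact
    (Z : Type*) [TopologicalSpace Z] [CompactSpace Z] [T2Space Z] [TotallyDisconnectedSpace Z]
    (A' A A'' : Type*) [AddCommGroup A'] [AddCommGroup A] [AddCommGroup A'']
    (i : A' →+ A) (π : A →+ A'')
    (hi : Function.Injective i) (hπ : Function.Surjective π)
    (hexact : ∀ a : A, π a = 0 ↔ a ∈ Set.range i) :
    Function.Injective (mapMeas (Z := Z) i) ∧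
    Function.Surjective (mapMeas (Z := Z) π) ∧
    (∀ ν : MeasAdd Z A, mapMeas π ν = 0 ↔ ∃ ν' : MeasAdd Z A', mapMeas i ν' = ν) := by
  classical
  refine ⟨?_, ?_, ?_⟩
  · intro ν₁ ν₂ h
    apply Subtype.ext
    funext U
    exact hi (congrFun (congrArg Subtype.val h) U)
  · intro ν''
    haveI : Module.Free ℤ (LocallyConstant Z ℤ) := LocallyConstant.freeOfProfinite (Profinite.of Z)
    obtain ⟨h, hh⟩ := Module.projective_lifting_property (π.toIntLinearMap)
      ((AddMonoidHom.mk' (MeasProof.intg ν'') (MeasProof.intg_add ν'')).toIntLinearMap) hπ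
    refine ⟨⟨fun U => h (MeasProof.indLC U), ?_⟩, ?_⟩
    · intro U V hUV
      dsimp only
      rw [MeasProof.indLC_diff U V hUV, map_add]
    · apply Subtype.ext
      funext U
      have h2 := LinearMap.congr_fun hh (MeasProof.indLC U)
      simp only [LinearMap.comp_apply, AddMonoidHom.coe_toIntLinearMap, AddMonoidHom.mk'_apply] at h2
      exact h2.trans (MeasProof.intg_indLC ν'' U)
  · intro ν
    constructor
    · intro h0
      have hr : ∀ U, ν.1 U ∈ Set.range i := fun U =>
        (hexact _).mp (congrFun (congrArg Subtype.val h0) U)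
      choose g hg using hr
      refine ⟨⟨g, ?_⟩, ?_⟩
      · intro U V h
        apply hi
        rw [map_add, hg, hg, hg]
        exact ν.2 U V h
      · exact Subtype.ext (funext fun U => hg U)
    · rintro ⟨ν', rfl⟩
      apply Subtype.ext
      funext U
      exact (hexact _).mpr ⟨ν'.1 U, rfl⟩
end

section
/- Let 𝔞 be an abelian group and let (Z_i) be a cofiltered inverse system of finite discrete sets with inverse limit the profinite set Z, with continuous projections p_i : Z → Z_i. Then the pushforward maps (p_i)_* induce isomorphisms of abelian groups M(Z,𝔞) ≅ lim_i M(Z_i,𝔞) and M₀(Z,𝔞) ≅ lim_i M₀(Z_i,𝔞). -/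
open TopologicalSpace

open CategoryTheory in
/-- If a clopen set at a finite level has empty preimage in the limit, it "dies" at some
later level. -/
private lemma exists_level_empty
    {ι : Type*} [Preorder ι] [IsDirected ι (· ≤ ·)]
    (Zi : ι → Type*) [∀ i, Finite (Zi i)]
    (f : ∀ i j, i ≤ j → Zi j → Zi i)
    (hf_id : ∀ i (z : Zi i), f i i le_rfl z = z)
    (hf_comp : ∀ i j k (hij : i ≤ j) (hjk : j ≤ k) (z : Zi k),
      f i j hij (f j k hjk z) = f i k (hij.trans hjk) z)
    {Z : Type*} (p : ∀ i, Z → Zi i)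
    (hlim : ∀ x : ∀ i, Zi i, (∀ i j (h : i ≤ j), f i j h (x j) = x i) →
      ∃! z : Z, ∀ i, p i z = x i)
    (k : ι) (S : Set (Zi k)) (hS : p k ⁻¹' S = ∅) :
    ∃ j, ∃ h : k ≤ j, f k j h ⁻¹' S = ∅ := by
  by_contra hc
  push_neg at hc
  have hne : ∀ j (h : k ≤ j), (f k j h ⁻¹' S).Nonempty := hc
  let F : ιᵒᵖ ⥤ Type _ :=
  { obj := fun j => {z : Zi j.unop // ∀ h : k ≤ j.unop, f k j.unop h z ∈ S}
    map := fun {j j'} g => TypeCat.ofHom fun z => ⟨f j'.unop j.unop (leOfHom g.unop) z.1, fun h => by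
      rw [hf_comp _ _ _ h (leOfHom g.unop)]; exact z.2 _⟩
    map_id := fun j => by ext z; exact hf_id _ _
    map_comp := fun {j j' j''} g g' => by
      ext z; exact (hf_comp _ _ _ _ _ _).symm }
  haveI : ∀ j : ιᵒᵖ, Finite (F.obj j) := fun j => Subtype.finite
  haveI : ∀ j : ιᵒᵖ, Nonempty (F.obj j) := by
    intro j
    obtain ⟨m, hkm, hjm⟩ := directed_of (· ≤ ·) k j.unop
    obtain ⟨z, hz⟩ := hne m hkm
    exact ⟨⟨f j.unop m hjm z, fun h => by rw [hf_comp _ _ _ h hjm]; exact hz⟩⟩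
  obtain ⟨u, hu⟩ := nonempty_sections_of_finite_inverse_system F
  have hcompat : ∀ i j (h : i ≤ j),
      f i j h ((u (Opposite.op j)).1) = (u (Opposite.op i)).1 := by
    intro i j h
    exact congrArg Subtype.val (hu ((homOfLE h).op : Opposite.op j ⟶ Opposite.op i))
  obtain ⟨z, hz, -⟩ := hlim (fun i => (u (Opposite.op i)).1) hcompat
  have hmem : p k z ∈ S := by
    have h2 := (u (Opposite.op k)).2 le_rfl
    rw [hf_id] at h2
    rw [hz k]
    exact h2
  exact (Set.eq_empty_iff_forall_notMem.1 hS z) hmem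

/-- Every clopen subset of the limit is the preimage of a set at some finite level. -/
private lemma exists_level_rep
    {ι : Type*} [Preorder ι] [IsDirected ι (· ≤ ·)] [Nonempty ι]
    (Zi : ι → Type*) [∀ i, Finite (Zi i)] [∀ i, TopologicalSpace (Zi i)]
    [∀ i, DiscreteTopology (Zi i)]
    (f : ∀ i j, i ≤ j → Zi j → Zi i)
    {Z : Type*} [TopologicalSpace Z] [CompactSpace Z] [T2Space Z]
    (p : ∀ i, Z → Zi i) (hp : ∀ i, Continuous (p i))
    (hcomm : ∀ i j (h : i ≤ j) (z : Z), f i j h (p j z) = p i z)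
    (hsep : ∀ z w : Z, (∀ i, p i z = p i w) → z = w)
    (U : Set Z) (hU : IsClopen U) :
    ∃ i, ∃ S : Set (Zi i), U = p i ⁻¹' S := by
  classical
  set q : Z → ∀ i, Zi i := fun z i => p i z with hq
  have hqc : Continuous q := continuous_pi hp
  have hqi : Function.Injective q := fun z w h => hsep z w fun i => congrFun h i
  have hind : Topology.IsInducing q := (hqc.isClosedEmbedding hqi).isInducing
  have key : ∀ z ∈ U, ∃ m : ι, p m ⁻¹' {p m z} ⊆ U := by
    intro z hz
    have hU' : U ∈ nhds z := hU.isOpen.mem_nhds hz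
    rw [hind.nhds_eq_comap z, Filter.mem_comap] at hU'
    obtain ⟨V, hV, hVU⟩ := hU'
    rw [nhds_pi, Filter.mem_pi] at hV
    obtain ⟨I, hIfin, t, ht, htV⟩ := hV
    obtain ⟨m, hm⟩ := hIfin.toFinset.exists_le
    refine ⟨m, fun w hw => ?_⟩
    apply hVU
    apply htV
    intro i hi
    have him : i ≤ m := hm i (hIfin.mem_toFinset.2 hi)
    have hqw : q w i = q z i := by
      show p i w = p i z
      rw [← hcomm i m him w, ← hcomm i m him z]
      exact congrArg (f i m him) hw
    rw [hqw]
    exact mem_nhds_discrete.1 (ht i)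
  have key' : ∀ z : U, ∃ m, p m ⁻¹' {p m z.1} ⊆ U := fun z => key z.1 z.2
  choose m hm using key'
  have hcov : U ⊆ ⋃ z : U, p (m z) ⁻¹' {p (m z) z.1} := fun w hw =>
    Set.mem_iUnion.2 ⟨⟨w, hw⟩, rfl⟩
  obtain ⟨t, hts⟩ := (hU.isClosed.isCompact).elim_finite_subcover
    (fun z : U => p (m z) ⁻¹' {p (m z) z.1})
    (fun z => (isOpen_discrete _).preimage (hp _)) hcov
  obtain ⟨M, hM⟩ := (t.image m).exists_le
  have hsat : ∀ w ∈ U, ∀ w', p M w' = p M w → w' ∈ U := by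
    intro w hw w' hww'
    obtain ⟨z, hzt, hwz⟩ := Set.mem_iUnion₂.1 (hts hw)
    have hwz' : p (m z) w = p (m z) z.1 := hwz
    have hzM : m z ≤ M := hM _ (Finset.mem_image_of_mem m hzt)
    have : p (m z) w' = p (m z) z.1 := by
      rw [← hcomm _ M hzM w', hww', hcomm _ M hzM w]
      exact hwz'
    exact hm z this
  refine ⟨M, p M '' U, ?_⟩
  ext w
  constructor
  · exact fun hw => Set.mem_image_of_mem _ hw
  · rintro ⟨w', hw', hww'⟩
    exact hsat w' hw' w hww'.symm

private lemma MeasAdd.apply_bot' {Z : Type*} [TopologicalSpace Z] {A : Type*} [AddCommGroup A]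
    (ν : MeasAdd Z A) : ν.1 ⊥ = 0 := by
  have h := ν.2 ⊥ ⊥ subset_rfl
  have hb : ((⊥ : Clopens Z) \ ⊥) = ⊥ := by ext x; simp
  rw [hb] at h
  have h0 : ν.1 ⊥ + ν.1 ⊥ = ν.1 ⊥ + 0 := by rw [add_zero, ← h]
  exact add_left_cancel h0

private lemma meas_congr' {X : Type*} [TopologicalSpace X] {A : Type*} [AddCommGroup A]
    (ν : MeasAdd X A) (S T : Clopens X) (h1 : ν.1 (S \ T) = 0) (h2 : ν.1 (T \ S) = 0) :
    ν.1 S = ν.1 T := by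
  have hS := ν.2 S (S ⊓ T) (fun x hx => hx.1)
  have hT := ν.2 T (S ⊓ T) (fun x hx => hx.2)
  have hS' : S \ (S ⊓ T) = S \ T := by ext x; simp
  have hT' : T \ (S ⊓ T) = T \ S := by ext x; simp [and_comm]
  rw [hS'] at hS
  rw [hT'] at hT
  rw [hS, hT, h1, h2]
/-- Let `A` be an abelian group and `(Zᵢ)` a cofiltered (directed) inverse
system of finite discrete sets, with inverse limit the profinite set `Z` (expressed by the
unique lifting property `hlim` for the continuous projections `p i : Z → Zᵢ`). Then the
pushforward maps `(p i)_*` identify `M(Z, A)` with `lim_i M(Zᵢ, A)` and `M₀(Z, A)` with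
`lim_i M₀(Zᵢ, A)`. -/
theorem measures_of_inverse_limit
    {ι : Type*} [Preorder ι] [IsDirected ι (· ≤ ·)] [Nonempty ι]
    (Zi : ι → Type*) [∀ i, Finite (Zi i)] [∀ i, TopologicalSpace (Zi i)]
    [∀ i, DiscreteTopology (Zi i)]
    (f : ∀ i j, i ≤ j → Zi j → Zi i)
    (hf_id : ∀ i (z : Zi i), f i i le_rfl z = z)
    (hf_comp : ∀ i j k (hij : i ≤ j) (hjk : j ≤ k) (z : Zi k),
      f i j hij (f j k hjk z) = f i k (hij.trans hjk) z)
    (Z : Type*) [TopologicalSpace Z] [CompactSpace Z] [T2Space Z] [TotallyDisconnectedSpace Z]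
    (p : ∀ i, Z → Zi i) (hp : ∀ i, Continuous (p i))
    (hcomm : ∀ i j (h : i ≤ j) (z : Z), f i j h (p j z) = p i z)
    (hlim : ∀ x : ∀ i, Zi i, (∀ i j (h : i ≤ j), f i j h (x j) = x i) →
      ∃! z : Z, ∀ i, p i z = x i)
    (A : Type*) [AddCommGroup A] :
    (Function.Injective fun (ν : MeasAdd Z A) (i : ι) => pushMeas (p i) (hp i) ν) ∧
    (∀ x : ∀ i, MeasAdd (Zi i) A,
      (∀ i j (h : i ≤ j), pushMeas (f i j h) continuous_of_discreteTopology (x j) = x i) →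
      ∃ ν : MeasAdd Z A, ∀ i, pushMeas (p i) (hp i) ν = x i) ∧
    (∀ x : ∀ i, MeasAdd (Zi i) A,
      (∀ i j (h : i ≤ j), pushMeas (f i j h) continuous_of_discreteTopology (x j) = x i) →
      (∀ i, (x i).1 ⊤ = 0) →
      ∃ ν : MeasAdd Z A, ν.1 ⊤ = 0 ∧ ∀ i, pushMeas (p i) (hp i) ν = x i) := by
  classical
  have hsep : ∀ z w : Z, (∀ i, p i z = p i w) → z = w := by
    intro z w h
    obtain ⟨c, -, huniq⟩ := hlim (fun i => p i w) (fun i j hij => hcomm i j hij w)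
    exact (huniq z h).trans (huniq w fun i => rfl).symm
  have hrep : ∀ U : Clopens Z, ∃ i, ∃ S : Set (Zi i), (U : Set Z) = p i ⁻¹' S :=
    fun U => exists_level_rep Zi f p hp hcomm hsep U U.isClopen
  -- a compatible family vanishes on sets with empty preimage in the limit
  have hzero : ∀ (x : ∀ i, MeasAdd (Zi i) A),
      (∀ i j (h : i ≤ j), pushMeas (f i j h) continuous_of_discreteTopology (x j) = x i) →
      ∀ k (S : Set (Zi k)), p k ⁻¹' S = ∅ →
        (x k).1 ⟨S, isClopen_discrete S⟩ = 0 := by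
    intro x hx k S hS
    obtain ⟨j, hkj, hempty⟩ := exists_level_empty Zi f hf_id hf_comp p hlim k S hS
    have h1 : (x j).1 ⟨f k j hkj ⁻¹' S,
        (isClopen_discrete S).preimage continuous_of_discreteTopology⟩
        = (x k).1 ⟨S, isClopen_discrete S⟩ := by
      exact congrArg (fun ν : MeasAdd (Zi k) A => ν.1 ⟨S, isClopen_discrete S⟩) (hx k j hkj)
    rw [← h1]
    have hb : (⟨f k j hkj ⁻¹' S, (isClopen_discrete S).preimage continuous_of_discreteTopology⟩ :
        Clopens (Zi j)) = ⊥ := by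
      ext1
      simpa using hempty
    rw [hb]
    exact MeasAdd.apply_bot' (x j)
  -- well-definedness of the value of the limit measure
  have hW : ∀ (x : ∀ i, MeasAdd (Zi i) A),
      (∀ i j (h : i ≤ j), pushMeas (f i j h) continuous_of_discreteTopology (x j) = x i) →
      ∀ (i j : ι) (S : Set (Zi i)) (T : Set (Zi j)), p i ⁻¹' S = p j ⁻¹' T →
        (x i).1 ⟨S, isClopen_discrete S⟩ = (x j).1 ⟨T, isClopen_discrete T⟩ := by
    intro x hx i j S T hST
    obtain ⟨k, hik, hjk⟩ := directed_of (· ≤ ·) i j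
    have h1 : (x i).1 ⟨S, isClopen_discrete S⟩
        = (x k).1 ⟨f i k hik ⁻¹' S, isClopen_discrete _⟩ := by
      rw [← hx i k hik]; rfl
    have h2 : (x j).1 ⟨T, isClopen_discrete T⟩
        = (x k).1 ⟨f j k hjk ⁻¹' T, isClopen_discrete _⟩ := by
      rw [← hx j k hjk]; rfl
    set S' := f i k hik ⁻¹' S with hS'def
    set T' := f j k hjk ⁻¹' T with hT'def
    have hSk : p k ⁻¹' S' = p i ⁻¹' S := by
      ext z; simp [hS'def, hcomm i k hik z]
    have hTk : p k ⁻¹' T' = p j ⁻¹' T := by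
      ext z; simp [hT'def, hcomm j k hjk z]
    have heq : p k ⁻¹' S' = p k ⁻¹' T' := by rw [hSk, hTk, hST]
    rw [h1, h2]
    refine meas_congr' (x k) ⟨S', isClopen_discrete _⟩ ⟨T', isClopen_discrete _⟩ ?_ ?_
    · have hd : p k ⁻¹' (S' \ T') = ∅ := by
        ext z
        simp only [Set.mem_preimage, Set.mem_diff, Set.mem_empty_iff_false, iff_false, not_and,
          not_not]
        intro hzS
        exact (Set.ext_iff.1 heq z).1 hzS
      exact hzero x hx k (S' \ T') hd
    · have hd : p k ⁻¹' (T' \ S') = ∅ := by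
        ext z
        simp only [Set.mem_preimage, Set.mem_diff, Set.mem_empty_iff_false, iff_false, not_and,
          not_not]
        intro hzT
        exact (Set.ext_iff.1 heq z).2 hzT
      exact hzero x hx k (T' \ S') hd
  -- construction of the limit measure
  have hexists : ∀ (x : ∀ i, MeasAdd (Zi i) A),
      (∀ i j (h : i ≤ j), pushMeas (f i j h) continuous_of_discreteTopology (x j) = x i) →
      ∃ ν : MeasAdd Z A, (∀ i, pushMeas (p i) (hp i) ν = x i) ∧
        ∀ (U : Clopens Z) (i : ι) (S : Set (Zi i)), (U : Set Z) = p i ⁻¹' S →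
          ν.1 U = (x i).1 ⟨S, isClopen_discrete S⟩ := by
    intro x hx
    choose idx Sof hSof using hrep
    set ν0 : Clopens Z → A := fun U => (x (idx U)).1 ⟨Sof U, isClopen_discrete _⟩ with hν0def
    have hν0 : ∀ (U : Clopens Z) (i : ι) (S : Set (Zi i)), (U : Set Z) = p i ⁻¹' S →
        ν0 U = (x i).1 ⟨S, isClopen_discrete S⟩ := by
      intro U i S h
      exact hW x hx _ _ _ _ (by rw [← hSof U, h])
    have hmem : ν0 ∈ MeasAdd Z A := by
      intro U V hUV
      obtain ⟨k, hik, hjk⟩ := directed_of (· ≤ ·) (idx U) (idx V)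
      set S' := f _ k hik ⁻¹' (Sof U) with hS'def
      set T' := (f _ k hjk ⁻¹' (Sof V)) ∩ S' with hT'def
      have hU' : (U : Set Z) = p k ⁻¹' S' := by
        rw [hSof U]; ext z; simp [hS'def, hcomm _ k hik z]
      have hV0 : (V : Set Z) = p k ⁻¹' (f _ k hjk ⁻¹' (Sof V)) := by
        rw [hSof V]; ext z; simp [hcomm _ k hjk z]
      have hV' : (V : Set Z) = p k ⁻¹' T' := by
        rw [hT'def, Set.preimage_inter, ← hU', ← hV0]
        exact (Set.inter_eq_left.2 hUV).symm
      have hD : ((U \ V : Clopens Z) : Set Z) = p k ⁻¹' (S' \ T') := by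
        have hUV' : ((U \ V : Clopens Z) : Set Z) = (U : Set Z) \ (V : Set Z) := rfl
        rw [hUV', hU', hV', Set.preimage_diff]
      rw [hν0 U k S' hU', hν0 V k T' hV', hν0 (U \ V) k (S' \ T') hD]
      have hkey := (x k).2 ⟨S', isClopen_discrete _⟩ ⟨T', isClopen_discrete _⟩
        (fun a ha => ha.2)
      have hsd : ((⟨S', isClopen_discrete _⟩ : Clopens (Zi k)) \ ⟨T', isClopen_discrete _⟩)
          = (⟨S' \ T', isClopen_discrete _⟩ : Clopens (Zi k)) := rfl
      rw [hsd] at hkey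
      exact hkey
    refine ⟨⟨ν0, hmem⟩, fun i => ?_, fun U i S h => hν0 U i S h⟩
    apply Subtype.ext
    funext T
    show ν0 ⟨p i ⁻¹' (T : Set (Zi i)), T.isClopen.preimage (hp i)⟩ = (x i).1 T
    rw [hν0 ⟨p i ⁻¹' (T : Set (Zi i)), T.isClopen.preimage (hp i)⟩ i (T : Set (Zi i)) rfl]
    exact congrArg (fun W => (x i).1 W) (Clopens.ext rfl)
  refine ⟨?_, ?_, ?_⟩
  · intro ν ν' h
    apply Subtype.ext
    funext U
    obtain ⟨i, S, hS⟩ := hrep U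
    have hU : U = ⟨p i ⁻¹' S, (isClopen_discrete S).preimage (hp i)⟩ := by
      ext1; exact hS
    have h1 : ν.1 ⟨p i ⁻¹' S, (isClopen_discrete S).preimage (hp i)⟩
        = ν'.1 ⟨p i ⁻¹' S, (isClopen_discrete S).preimage (hp i)⟩ := by
      exact congrArg
        (fun g : ∀ i : ι, MeasAdd (Zi i) A => (g i).1 ⟨S, isClopen_discrete S⟩) h
    rw [hU]
    exact h1
  · intro x hx
    obtain ⟨ν, hν, -⟩ := hexists x hx
    exact ⟨ν, hν⟩
  · intro x hx hx0
    obtain ⟨ν, hν, hν2⟩ := hexists x hx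
    refine ⟨ν, ?_, hν⟩
    obtain ⟨i⟩ := ‹Nonempty ι›
    have htop := hν2 ⊤ i Set.univ (by simp)
    rw [htop]
    have huniv : (⟨Set.univ, isClopen_discrete _⟩ : Clopens (Zi i)) = ⊤ := by ext1; rfl
    rw [huniv]
    exact hx0 i
end

section
/- The isomorphism j_z restricts to a group isomorphism from {g ∈ GL₂(F)_z : det(g) ∈ 𝒪_F^×} onto 𝒪_E^×, and to a group isomorphism from SL₂(F)_z = {g ∈ GL₂(F)_z : det(g) = 1} onto {x ∈ 𝒪_E^× : N(x) = 1}. -/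
/-- A matrix `g ∈ GL₂(F)` fixes the point `z ∈ E` under the Möbius action. -/
def FixesMoebius {F E : Type*} [Field F] [Field E] [Algebra F E] (z : E)
    (g : (Matrix (Fin 2) (Fin 2) F)ˣ) : Prop :=
  algebraMap F E ((g : Matrix (Fin 2) (Fin 2) F) 0 0) * z +
      algebraMap F E ((g : Matrix (Fin 2) (Fin 2) F) 0 1) =
    z * (algebraMap F E ((g : Matrix (Fin 2) (Fin 2) F) 1 0) * z +
      algebraMap F E ((g : Matrix (Fin 2) (Fin 2) F) 1 1))

/-- The map `j_z`, sending the matrix `[[a, −c·n],[c, a − c·t]]` to `a − c·z`. -/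
def jmap {F E : Type*} [Field F] [Field E] [Algebra F E] (z : E)
    (g : (Matrix (Fin 2) (Fin 2) F)ˣ) : E :=
  algebraMap F E ((g : Matrix (Fin 2) (Fin 2) F) 0 0) -
    algebraMap F E ((g : Matrix (Fin 2) (Fin 2) F) 1 0) * z

/-- Let `F` be a finite extension of `ℚ_p` and `E = F(z)` a quadratic
extension generated by `z` with `z² = t·z − n`. The isomorphism `j_z` restricts to a group
isomorphism from `{g ∈ GL₂(F)_z : det g ∈ 𝒪_F^×}` onto `𝒪_E^×` (the elements of norm one,
i.e. the units of the valuation ring of `E`), and from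
`SL₂(F)_z = {g ∈ GL₂(F)_z : det g = 1}` onto `{x ∈ 𝒪_E^× : N_{E/F}(x) = 1}`. -/
theorem jz_restricts_to_unit_groups
    (p : ℕ) [Fact p.Prime]
    (F : Type*) [NormedField F] [Algebra ℚ_[p] F] [FiniteDimensional ℚ_[p] F]
    (hQpF : ∀ x : ℚ_[p], ‖algebraMap ℚ_[p] F x‖ = ‖x‖)
    (hnaF : ∀ x y : F, ‖x + y‖ ≤ max ‖x‖ ‖y‖)
    (E : Type*) [NormedField E] [Algebra F E]
    (hFE : ∀ x : F, ‖algebraMap F E x‖ = ‖x‖)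
    (hnaE : ∀ x y : E, ‖x + y‖ ≤ max ‖x‖ ‖y‖)
    (hdim : Module.finrank F E = 2)
    (z : E) (hz : z ∉ Set.range (algebraMap F E)) (t n : F)
    (hquad : z ^ 2 = algebraMap F E t * z - algebraMap F E n) :
    (∀ g h : (Matrix (Fin 2) (Fin 2) F)ˣ, FixesMoebius z g → FixesMoebius z h →
      jmap z (g * h) = jmap z g * jmap z h) ∧
    Set.BijOn (jmap z)
      {g : (Matrix (Fin 2) (Fin 2) F)ˣ |
        FixesMoebius z g ∧ ‖Matrix.det (g : Matrix (Fin 2) (Fin 2) F)‖ = 1}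
      {x : E | ‖x‖ = 1} ∧
    Set.BijOn (jmap z)
      {g : (Matrix (Fin 2) (Fin 2) F)ˣ |
        FixesMoebius z g ∧ Matrix.det (g : Matrix (Fin 2) (Fin 2) F) = 1}
      {x : E | ‖x‖ = 1 ∧ Algebra.norm F x = 1} := by
  classical
  -- instances
  letI : NormedSpace ℚ_[p] F :=
    { toModule := Algebra.toModule
      norm_smul_le := fun c x => le_of_eq (by rw [Algebra.smul_def, norm_mul, hQpF]) }
  haveI : CompleteSpace F := FiniteDimensional.complete ℚ_[p] F
  letI : NontriviallyNormedField F :=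
    { toNormedField := inferInstance
      non_trivial := ⟨algebraMap ℚ_[p] F ((p : ℚ_[p]))⁻¹, by
        rw [hQpF, norm_inv, Padic.norm_p, inv_inv]
        exact_mod_cast (Fact.out : p.Prime).one_lt⟩ }
  letI : NormedSpace F E :=
    { toModule := Algebra.toModule
      norm_smul_le := fun c x => le_of_eq (by rw [Algebra.smul_def, norm_mul, hFE]) }
  haveI : FiniteDimensional F E := FiniteDimensional.of_finrank_eq_succ hdim
  -- key linear independence fact
  have key : ∀ u v : F, algebraMap F E u + algebraMap F E v * z = 0 → u = 0 ∧ v = 0 := by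
    intro u v h
    by_cases hv : v = 0
    · refine ⟨?_, hv⟩
      rw [hv, map_zero, zero_mul, add_zero] at h
      exact (map_eq_zero _).mp h
    · exfalso
      apply hz
      refine ⟨-u / v, ?_⟩
      have hv' : algebraMap F E v ≠ 0 := fun hh => hv ((map_eq_zero _).mp hh)
      rw [map_div₀, map_neg]
      field_simp
      linear_combination -h
  have hli : LinearIndependent F ![(1 : E), z] := by
    rw [LinearIndependent.pair_iff]
    intro s u hsu
    refine key s u ?_
    have : s • (1 : E) + u • z = algebraMap F E s + algebraMap F E u * z := by
      simp [Algebra.smul_def]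
    rw [← this]; exact hsu
  let b : Module.Basis (Fin 2) F E :=
    basisOfLinearIndependentOfCardEqFinrank hli (by simp [hdim])
  have hb0 : b 0 = 1 := by
    simp [b, coe_basisOfLinearIndependentOfCardEqFinrank]
  have hb1 : b 1 = z := by
    simp [b, coe_basisOfLinearIndependentOfCardEqFinrank]
  have hrepr : ∀ α β : F, b.repr (algebraMap F E α + algebraMap F E β * z)
      = Finsupp.single 0 α + Finsupp.single 1 β := by
    intro α β
    have hx : algebraMap F E α + algebraMap F E β * z = α • b 0 + β • b 1 := by
      rw [hb0, hb1]; simp [Algebra.smul_def]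
    rw [hx, map_add, map_smul, map_smul, Module.Basis.repr_self, Module.Basis.repr_self,
      Finsupp.smul_single, Finsupp.smul_single, smul_eq_mul, smul_eq_mul, mul_one, mul_one]
  -- norm of a general element
  have hnorm : ∀ α β : F, Algebra.norm F (algebraMap F E α + algebraMap F E β * z)
      = α ^ 2 + α * β * t + β ^ 2 * n := by
    intro α β
    set x : E := algebraMap F E α + algebraMap F E β * z with hxdef
    have hxz : x * z = algebraMap F E (-(β * n)) + algebraMap F E (α + β * t) * z := by
      rw [map_neg, map_mul, map_add, map_mul]
      linear_combination (algebraMap F E β) * hquad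
    rw [Algebra.norm_eq_matrix_det b, Matrix.det_fin_two]
    have e00 : Algebra.leftMulMatrix b x 0 0 = α := by
      rw [Algebra.leftMulMatrix_eq_repr_mul, hb0, mul_one, hrepr]
      simp
    have e10 : Algebra.leftMulMatrix b x 1 0 = β := by
      rw [Algebra.leftMulMatrix_eq_repr_mul, hb0, mul_one, hrepr]
      simp
    have e01 : Algebra.leftMulMatrix b x 0 1 = -(β * n) := by
      rw [Algebra.leftMulMatrix_eq_repr_mul, hb1, hxz, hrepr]
      simp
    have e11 : Algebra.leftMulMatrix b x 1 1 = α + β * t := by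
      rw [Algebra.leftMulMatrix_eq_repr_mul, hb1, hxz, hrepr]
      simp
    rw [e00, e10, e01, e11]; ring
  -- decomposition of an arbitrary element
  have hdecomp : ∀ x : E,
      x = algebraMap F E (b.repr x 0) + algebraMap F E (b.repr x 1) * z := by
    intro x
    conv_lhs => rw [← b.sum_repr x]
    rw [Fin.sum_univ_two, hb0, hb1, Algebra.smul_def, Algebra.smul_def, mul_one]
  have hNzero : Algebra.norm F (0 : E) = 0 := by
    have h0 : (0 : E) = algebraMap F E 0 + algebraMap F E 0 * z := by simp
    rw [h0, hnorm]; ring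
  -- continuity of the norm form
  have hcoord0 : Continuous fun x : E => b.repr x 0 := by
    exact (b.coord 0).continuous_of_finiteDimensional.congr (fun x => b.coord_apply 0 x)
  have hcoord1 : Continuous fun x : E => b.repr x 1 := by
    exact (b.coord 1).continuous_of_finiteDimensional.congr (fun x => b.coord_apply 1 x)
  set f : E → F := fun x =>
    (b.repr x 0) ^ 2 + (b.repr x 0) * (b.repr x 1) * t + (b.repr x 1) ^ 2 * n with hfdef
  have hf : ∀ x : E, Algebra.norm F x = f x := by
    intro x
    conv_lhs => rw [hdecomp x]
    rw [hnorm]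
  have hfc : Continuous f := by
    apply Continuous.add
    apply Continuous.add
    · exact hcoord0.pow 2
    · exact (hcoord0.mul hcoord1).mul continuous_const
    · exact (hcoord1.pow 2).mul continuous_const
  -- the key inequality
  have L : ∀ x : E, x ≠ 0 → ‖(Algebra.norm F) x‖ ≤ ‖x‖ ^ 2 := by
    intro x hx
    by_contra hlt
    push_neg at hlt
    set c : F := Algebra.norm F x with hc
    have hxpos : (0 : ℝ) < ‖x‖ ^ 2 := pow_pos (norm_pos_iff.mpr hx) 2
    have hcpos : (0 : ℝ) < ‖c‖ := lt_trans hxpos hlt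
    have hc0 : c ≠ 0 := norm_pos_iff.mp hcpos
    have hcE : algebraMap F E c ≠ 0 := fun hh => hc0 ((map_eq_zero _).mp hh)
    set y : E := x * x * (algebraMap F E c)⁻¹ with hy
    have hyn : ‖y‖ < 1 := by
      rw [hy, norm_mul, norm_mul, norm_inv, hFE, ← div_eq_mul_inv, div_lt_one hcpos]
      calc ‖x‖ * ‖x‖ = ‖x‖ ^ 2 := by ring
        _ < ‖c‖ := hlt
    have hNy : Algebra.norm F y = 1 := by
      have hyc : y * algebraMap F E c = x * x := by
        rw [hy]; field_simp
      have h2 : Algebra.norm F y * Algebra.norm F (algebraMap F E c)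
          = Algebra.norm F x * Algebra.norm F x := by
        rw [← map_mul, hyc, map_mul]
      rw [Algebra.norm_algebraMap, hdim, ← hc] at h2
      have h3 : Algebra.norm F y * c ^ 2 = 1 * c ^ 2 := by linear_combination h2
      exact mul_right_cancel₀ (pow_ne_zero 2 hc0) h3
    have ht : Filter.Tendsto (fun k : ℕ => y ^ k) Filter.atTop (nhds 0) :=
      tendsto_pow_atTop_nhds_zero_of_norm_lt_one hyn
    have ht2 : Filter.Tendsto (fun k : ℕ => f (y ^ k)) Filter.atTop (nhds (f 0)) :=
      (hfc.tendsto 0).comp ht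
    have ht3 : (fun k : ℕ => f (y ^ k)) = fun _ : ℕ => (1 : F) := by
      funext k
      rw [← hf, map_pow, hNy, one_pow]
    rw [ht3] at ht2
    have hone : f 0 = 1 := tendsto_nhds_unique ht2 tendsto_const_nhds
    rw [← hf, hNzero] at hone
    exact zero_ne_one hone
  -- norm multiplicativity on inverses
  have hNinv : ∀ x : E, x ≠ 0 → Algebra.norm F x⁻¹ = (Algebra.norm F x)⁻¹ := by
    intro x hx
    have hp : Algebra.norm F x * Algebra.norm F x⁻¹ = 1 := by
      rw [← map_mul, mul_inv_cancel₀ hx, map_one]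
    exact eq_inv_of_mul_eq_one_right (by linear_combination hp)
  have hNne : ∀ x : E, x ≠ 0 → Algebra.norm F x ≠ 0 := by
    intro x hx hh
    have hp : Algebra.norm F x * Algebra.norm F x⁻¹ = 1 := by
      rw [← map_mul, mul_inv_cancel₀ hx, map_one]
    rw [hh, zero_mul] at hp
    exact zero_ne_one hp
  -- the norm identity
  have star : ∀ x : E, x ≠ 0 → ‖x‖ ^ 2 = ‖(Algebra.norm F) x‖ := by
    intro x hx
    have h1 := L x hx
    have h2 := L x⁻¹ (inv_ne_zero hx)
    rw [hNinv x hx, norm_inv, norm_inv, inv_pow] at h2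
    have hxpos : (0 : ℝ) < ‖x‖ ^ 2 := pow_pos (norm_pos_iff.mpr hx) 2
    have hNpos : (0 : ℝ) < ‖Algebra.norm F x‖ := norm_pos_iff.mpr (hNne x hx)
    refine le_antisymm ((inv_le_inv₀ hNpos hxpos).mp h2) h1
  have sqrt1 : ∀ r : ℝ, 0 ≤ r → r ^ 2 = 1 → r = 1 := by
    intro r h0 h1
    have h2 : (r - 1) * (r + 1) = 0 := by linear_combination h1
    rcases mul_eq_zero.mp h2 with h | h
    · linarith
    · linarith
  -- characterization of FixesMoebius
  have hfix : ∀ g : (Matrix (Fin 2) (Fin 2) F)ˣ, FixesMoebius z g ↔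
      ((g : Matrix (Fin 2) (Fin 2) F) 0 1 = -((g : Matrix (Fin 2) (Fin 2) F) 1 0 * n) ∧
       (g : Matrix (Fin 2) (Fin 2) F) 1 1 = (g : Matrix (Fin 2) (Fin 2) F) 0 0 -
         (g : Matrix (Fin 2) (Fin 2) F) 1 0 * t) := by
    intro g
    set a := (g : Matrix (Fin 2) (Fin 2) F) 0 0
    set bb := (g : Matrix (Fin 2) (Fin 2) F) 0 1
    set cc := (g : Matrix (Fin 2) (Fin 2) F) 1 0
    set d := (g : Matrix (Fin 2) (Fin 2) F) 1 1
    constructor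
    · intro hg
      have hg' : algebraMap F E a * z + algebraMap F E bb =
          z * (algebraMap F E cc * z + algebraMap F E d) := hg
      have h0 : algebraMap F E (bb + cc * n) + algebraMap F E (a - cc * t - d) * z = 0 := by
        rw [map_add, map_mul, map_sub, map_sub, map_mul]
        linear_combination hg' + algebraMap F E cc * hquad
      obtain ⟨h1, h2⟩ := key _ _ h0
      constructor
      · linear_combination h1
      · linear_combination -h2
    · rintro ⟨h1, h2⟩
      show algebraMap F E a * z + algebraMap F E bb =
        z * (algebraMap F E cc * z + algebraMap F E d)
      rw [h1, h2, map_neg, map_mul, map_sub, map_mul]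
      linear_combination -(algebraMap F E cc) * hquad
  -- jmap of a fixer is nonzero
  have hjne : ∀ g : (Matrix (Fin 2) (Fin 2) F)ˣ, FixesMoebius z g → jmap z g ≠ 0 := by
    intro g hg h0
    have h0' : algebraMap F E ((g : Matrix (Fin 2) (Fin 2) F) 0 0) +
        algebraMap F E (-((g : Matrix (Fin 2) (Fin 2) F) 1 0)) * z = 0 := by
      rw [map_neg]
      have hj : algebraMap F E ((g : Matrix (Fin 2) (Fin 2) F) 0 0) -
          algebraMap F E ((g : Matrix (Fin 2) (Fin 2) F) 1 0) * z = 0 := h0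
      linear_combination hj
    obtain ⟨h1, h2⟩ := key _ _ h0'
    have h2' : (g : Matrix (Fin 2) (Fin 2) F) 1 0 = 0 := by linear_combination -h2
    have hdetne : (g : Matrix (Fin 2) (Fin 2) F).det ≠ 0 := by
      have := (Matrix.isUnit_iff_isUnit_det _).mp g.isUnit
      exact isUnit_iff_ne_zero.mp this
    apply hdetne
    rw [Matrix.det_fin_two, h1, h2']
    ring
  -- norm of jmap equals det
  have hdetN : ∀ g : (Matrix (Fin 2) (Fin 2) F)ˣ, FixesMoebius z g →
      Algebra.norm F (jmap z g) = (g : Matrix (Fin 2) (Fin 2) F).det := by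
    intro g hg
    obtain ⟨h1, h2⟩ := (hfix g).mp hg
    have hj : jmap z g = algebraMap F E ((g : Matrix (Fin 2) (Fin 2) F) 0 0) +
        algebraMap F E (-((g : Matrix (Fin 2) (Fin 2) F) 1 0)) * z := by
      rw [map_neg]; show _ - _ = _; ring
    rw [hj, hnorm, Matrix.det_fin_two, h1, h2]
    ring
  -- multiplicativity
  have hmul : ∀ g h : (Matrix (Fin 2) (Fin 2) F)ˣ, FixesMoebius z g → FixesMoebius z h →
      jmap z (g * h) = jmap z g * jmap z h := by
    intro g h hg hh
    obtain ⟨hg1, hg2⟩ := (hfix g).mp hg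
    have hval : ((g * h : (Matrix (Fin 2) (Fin 2) F)ˣ) : Matrix (Fin 2) (Fin 2) F)
        = (g : Matrix (Fin 2) (Fin 2) F) * (h : Matrix (Fin 2) (Fin 2) F) := rfl
    show algebraMap F E (((g * h : (Matrix (Fin 2) (Fin 2) F)ˣ) : Matrix (Fin 2) (Fin 2) F) 0 0)
        - algebraMap F E (((g * h : (Matrix (Fin 2) (Fin 2) F)ˣ) : Matrix (Fin 2) (Fin 2) F) 1 0) * z
        = (algebraMap F E ((g : Matrix (Fin 2) (Fin 2) F) 0 0) -
            algebraMap F E ((g : Matrix (Fin 2) (Fin 2) F) 1 0) * z) *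
          (algebraMap F E ((h : Matrix (Fin 2) (Fin 2) F) 0 0) -
            algebraMap F E ((h : Matrix (Fin 2) (Fin 2) F) 1 0) * z)
    rw [hval, Matrix.mul_apply, Matrix.mul_apply, Fin.sum_univ_two, Fin.sum_univ_two, hg1, hg2]
    rw [map_add, map_add, map_mul, map_mul, map_mul, map_mul, map_neg, map_mul, map_sub, map_mul]
    linear_combination -(algebraMap F E ((g : Matrix (Fin 2) (Fin 2) F) 1 0) *
      algebraMap F E ((h : Matrix (Fin 2) (Fin 2) F) 1 0)) * hquad
  -- injectivity
  have hinj : ∀ g g' : (Matrix (Fin 2) (Fin 2) F)ˣ, FixesMoebius z g → FixesMoebius z g' →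
      jmap z g = jmap z g' → g = g' := by
    intro g g' hg hg' heq
    have heq' : algebraMap F E ((g : Matrix (Fin 2) (Fin 2) F) 0 0) -
        algebraMap F E ((g : Matrix (Fin 2) (Fin 2) F) 1 0) * z =
        algebraMap F E ((g' : Matrix (Fin 2) (Fin 2) F) 0 0) -
        algebraMap F E ((g' : Matrix (Fin 2) (Fin 2) F) 1 0) * z := heq
    have h0 : algebraMap F E ((g : Matrix (Fin 2) (Fin 2) F) 0 0 -
          (g' : Matrix (Fin 2) (Fin 2) F) 0 0) +
        algebraMap F E ((g' : Matrix (Fin 2) (Fin 2) F) 1 0 -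
          (g : Matrix (Fin 2) (Fin 2) F) 1 0) * z = 0 := by
      rw [map_sub, map_sub]
      linear_combination heq'
    obtain ⟨h1, h2⟩ := key _ _ h0
    have ha : (g : Matrix (Fin 2) (Fin 2) F) 0 0 = (g' : Matrix (Fin 2) (Fin 2) F) 0 0 :=
      sub_eq_zero.mp h1
    have hc : (g : Matrix (Fin 2) (Fin 2) F) 1 0 = (g' : Matrix (Fin 2) (Fin 2) F) 1 0 :=
      (sub_eq_zero.mp h2).symm
    obtain ⟨hgb, hgd⟩ := (hfix g).mp hg
    obtain ⟨hgb', hgd'⟩ := (hfix g').mp hg'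
    apply Units.ext
    ext i j
    fin_cases i <;> fin_cases j
    · exact ha
    · show (g : Matrix (Fin 2) (Fin 2) F) 0 1 = (g' : Matrix (Fin 2) (Fin 2) F) 0 1
      rw [hgb, hgb', hc]
    · exact hc
    · show (g : Matrix (Fin 2) (Fin 2) F) 1 1 = (g' : Matrix (Fin 2) (Fin 2) F) 1 1
      rw [hgd, hgd', ha, hc]
  -- surjectivity construction
  have hsurj : ∀ x : E, x ≠ 0 → ∃ g : (Matrix (Fin 2) (Fin 2) F)ˣ, FixesMoebius z g ∧
      (g : Matrix (Fin 2) (Fin 2) F).det = Algebra.norm F x ∧ jmap z g = x := by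
    intro x hx
    set α := b.repr x 0 with hα
    set β := b.repr x 1 with hβ
    have hx2 : x = algebraMap F E α + algebraMap F E β * z := hdecomp x
    set M : Matrix (Fin 2) (Fin 2) F := !![α, β * n; -β, α + β * t] with hM
    have hdetM : M.det = Algebra.norm F x := by
      rw [hM, Matrix.det_fin_two_of]
      conv_rhs => rw [hx2, hnorm]
      ring
    have hMunit : IsUnit M :=
      (Matrix.isUnit_iff_isUnit_det M).mpr
        (isUnit_iff_ne_zero.mpr (by rw [hdetM]; exact hNne x hx))
    refine ⟨hMunit.unit, ?_, ?_, ?_⟩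
    · rw [hfix]
      rw [hMunit.unit_spec]
      constructor
      · show M 0 1 = -(M 1 0 * n)
        rw [hM]; simp
      · show M 1 1 = M 0 0 - M 1 0 * t
        rw [hM]; simp
    · rw [hMunit.unit_spec, hdetM]
    · show algebraMap F E ((hMunit.unit : Matrix (Fin 2) (Fin 2) F) 0 0) -
          algebraMap F E ((hMunit.unit : Matrix (Fin 2) (Fin 2) F) 1 0) * z = x
      rw [hMunit.unit_spec]
      have hM00 : M 0 0 = α := by rw [hM]; simp
      have hM10 : M 1 0 = -β := by rw [hM]; simp
      rw [hM00, hM10, map_neg, hx2]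
      ring
  refine ⟨hmul, ⟨?_, ?_, ?_⟩, ⟨?_, ?_, ?_⟩⟩
  · -- MapsTo (unit norm det)
    rintro g ⟨hg, hd⟩
    show ‖jmap z g‖ = 1
    have hs := star (jmap z g) (hjne g hg)
    rw [hdetN g hg, hd] at hs
    exact sqrt1 _ (norm_nonneg _) hs
  · rintro g ⟨hg, _⟩ g' ⟨hg', _⟩ heq
    exact hinj g g' hg hg' heq
  · -- SurjOn
    rintro x hx1
    have hx1 : ‖x‖ = 1 := hx1
    have hxne : x ≠ 0 := by
      intro hh; rw [hh, norm_zero] at hx1; exact zero_ne_one hx1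
    obtain ⟨g, h1, h2, h3⟩ := hsurj x hxne
    refine ⟨g, ⟨h1, ?_⟩, h3⟩
    rw [h2, ← star x hxne, hx1, one_pow]
  · -- MapsTo (det = 1)
    rintro g ⟨hg, hd⟩
    have hN : Algebra.norm F (jmap z g) = 1 := by rw [hdetN g hg, hd]
    refine ⟨?_, hN⟩
    have hs := star (jmap z g) (hjne g hg)
    rw [hN, norm_one] at hs
    exact sqrt1 _ (norm_nonneg _) hs
  · rintro g ⟨hg, _⟩ g' ⟨hg', _⟩ heq
    exact hinj g g' hg hg' heq
  · rintro x ⟨hx1, hx2⟩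
    have hxne : x ≠ 0 := by
      intro hh; rw [hh, norm_zero] at hx1; exact zero_ne_one hx1
    obtain ⟨g, h1, h2, h3⟩ := hsurj x hxne
    refine ⟨g, ⟨h1, ?_⟩, h3⟩
    rw [h2, hx2]
end

section
/- Let T' ⊆ T be finite subtrees of a tree Γ and let e ∈ N(T). Then there is a unique f ∈ N(T') such that the unique path in Γ from t_T(e) to t_{T'}(f) contains no vertex of T'. -/
open SimpleGraph

/-- If a walk ends in `T'` and starts outside, there is an "entry" edge `(u, w)` with
`u ∈ T'` and a walk from the start to `w` avoiding `T'` entirely. -/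
theorem exists_entry_aux' {V : Type*} {Γ : SimpleGraph V} {T' : Set V} {b t : V}
    (p : Γ.Walk b t) (ht : t ∈ T') :
    b ∉ T' →
    ∃ u w, Γ.Adj u w ∧ u ∈ T' ∧ ∃ q : Γ.Walk b w, ∀ v ∈ q.support, v ∉ T' := by
  induction p with
  | nil => exact fun hb => absurd ht hb
  | @cons b c t h p ih =>
    intro hb
    by_cases hc : c ∈ T'
    · exact ⟨c, b, h.symm, hc, Walk.nil, by simpa using hb⟩
    · obtain ⟨u, w, hadj, hu, q, hq⟩ := ih ht hc
      refine ⟨u, w, hadj, hu, Walk.cons h q, ?_⟩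
      intro v hv
      rw [Walk.support_cons, List.mem_cons] at hv
      rcases hv with rfl | hv
      · exact hb
      · exact hq v hv

/-- Any two candidate edges are equal. -/
theorem entry_edge_unique_aux {V : Type*} {Γ : SimpleGraph V} (hΓ : Γ.IsTree)
    {T' : Set V} (hT'conn : (Γ.induce T').Connected) {y : V} (hy : y ∉ T')
    (f g : V × V)
    (hf : (Γ.Adj f.1 f.2 ∧ f.1 ∈ T' ∧ f.2 ∉ T') ∧
      ∀ p : Γ.Walk y f.2, p.IsPath → ∀ v ∈ p.support, v ∉ T')
    (hg : (Γ.Adj g.1 g.2 ∧ g.1 ∈ T' ∧ g.2 ∉ T') ∧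
      ∀ p : Γ.Walk y g.2, p.IsPath → ∀ v ∈ p.support, v ∉ T') :
    f = g := by
  classical
  obtain ⟨f1, f2⟩ := f
  obtain ⟨g1, g2⟩ := g
  obtain ⟨⟨haf, hf1, hf2⟩, hPf⟩ := hf
  obtain ⟨⟨hag, hg1, hg2⟩, hPg⟩ := hg
  -- the unique path from y to f2
  set p1 : Γ.Walk y f2 := ((hΓ.isConnected.preconnected y f2).some.toPath : Γ.Path y f2).val
    with hp1def
  have hp1 : p1.IsPath := ((hΓ.isConnected.preconnected y f2).some.toPath).prop
  have hp1T : ∀ v ∈ p1.support, v ∉ T' := hPf p1 hp1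
  set p2 : Γ.Walk y g2 := ((hΓ.isConnected.preconnected y g2).some.toPath : Γ.Path y g2).val
    with hp2def
  have hp2 : p2.IsPath := ((hΓ.isConnected.preconnected y g2).some.toPath).prop
  have hp2T : ∀ v ∈ p2.support, v ∉ T' := hPg p2 hp2
  -- extend them by the edges into T'
  set P1 : Γ.Walk y f1 := (Walk.cons haf p1.reverse).reverse with hP1def
  set P2 : Γ.Walk y g1 := (Walk.cons hag p2.reverse).reverse with hP2def
  have hP1 : P1.IsPath := by
    refine Walk.IsPath.reverse ?_
    rw [Walk.cons_isPath_iff]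
    refine ⟨hp1.reverse, fun h => ?_⟩
    rw [Walk.support_reverse, List.mem_reverse] at h
    exact hp1T f1 h hf1
  have hP2 : P2.IsPath := by
    refine Walk.IsPath.reverse ?_
    rw [Walk.cons_isPath_iff]
    refine ⟨hp2.reverse, fun h => ?_⟩
    rw [Walk.support_reverse, List.mem_reverse] at h
    exact hp2T g1 h hg1
  have hP1supp : ∀ v ∈ P1.support, v = f1 ∨ v ∈ p1.support := by
    intro v hv
    rw [hP1def, Walk.support_reverse, List.mem_reverse, Walk.support_cons, List.mem_cons,
      Walk.support_reverse, List.mem_reverse] at hv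
    exact hv
  have hP2supp : ∀ v ∈ P2.support, v = g1 ∨ v ∈ p2.support := by
    intro v hv
    rw [hP2def, Walk.support_reverse, List.mem_reverse, Walk.support_cons, List.mem_cons,
      Walk.support_reverse, List.mem_reverse] at hv
    exact hv
  -- a path from f1 to g1 inside T'
  obtain ⟨r0⟩ := hT'conn.preconnected ⟨f1, hf1⟩ ⟨g1, hg1⟩
  set r1 : Γ.Walk f1 g1 := r0.map (SimpleGraph.Embedding.induce T').toHom with hr1def
  have hr1T : ∀ v ∈ r1.support, v ∈ T' := by
    intro v hv
    replace hv : v ∈ List.map (SimpleGraph.Embedding.induce (G := Γ) T').toHom r0.support := by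
      rw [← Walk.support_map]; exact hv
    rw [List.mem_map] at hv
    obtain ⟨⟨u, hu⟩, _, rfl⟩ := hv
    exact hu
  set r2 : Γ.Walk f1 g1 := (r1.toPath : Γ.Path f1 g1).val with hr2def
  have hr2 : r2.IsPath := (r1.toPath).prop
  have hr2T : ∀ v ∈ r2.support, v ∈ T' := by
    intro v hv
    rw [hr2def] at hv
    exact hr1T v (r1.support_toPath_subset hv)
  -- the concatenation is a path from y to g1
  have hheadr2 : f1 ∉ r2.support.tail := by
    have := hr2.support_nodup
    rw [r2.support_eq_cons] at this
    exact (List.nodup_cons.mp this).1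
  set C : Γ.Walk y g1 := P1.append r2 with hCdef
  have hC : C.IsPath := by
    rw [Walk.isPath_def, hCdef, Walk.support_append]
    refine List.Nodup.append hP1.support_nodup (hr2.support_nodup.tail) ?_
    intro v hv1 hv2
    have hvT : v ∈ T' := hr2T v (List.mem_of_mem_tail hv2)
    rcases hP1supp v hv1 with rfl | hv
    · exact hheadr2 hv2
    · exact hp1T v hv hvT
  -- by uniqueness of paths, C = P2, so f1 ∈ P2.support, hence f1 = g1
  have hCP2 : C = P2 := by
    have := hΓ.2.path_unique ⟨C, hC⟩ ⟨P2, hP2⟩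
    exact congrArg Subtype.val this
  have hf1C : f1 ∈ C.support := by
    rw [hCdef, Walk.mem_support_append_iff]
    left
    exact P1.end_mem_support
  have hfg1 : f1 = g1 := by
    rw [hCP2] at hf1C
    rcases hP2supp f1 hf1C with h | h
    · exact h
    · exact absurd hf1 (hp2T f1 h)
  subst hfg1
  -- now P1 and P2 are both paths from y to f1, so they are equal
  have hP12 : P1 = P2 := by
    have := hΓ.2.path_unique ⟨P1, hP1⟩ ⟨P2, hP2⟩
    exact congrArg Subtype.val this
  have hsnd : f2 = g2 := by
    have h1 : P1.reverse.getVert 1 = f2 := by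
      rw [hP1def, Walk.reverse_reverse]
      exact (p1.reverse.getVert_cons_succ haf (n := 0)).trans (Walk.getVert_zero _)
    have h2 : P2.reverse.getVert 1 = g2 := by
      rw [hP2def, Walk.reverse_reverse]
      exact (p2.reverse.getVert_cons_succ hag (n := 0)).trans (Walk.getVert_zero _)
    rw [← h1, ← h2, hP12]
  rw [hsnd]

/-- Let `T' ⊆ T` be finite subtrees of a tree `Γ` (represented by their
vertex sets, with connected induced subgraphs), and let `e = (x, y)` be an edge of `Γ` with
exactly one endpoint `x` in `T` (so `e ∈ N(T)`, with `t_T(e) = y`). Then there is a unique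
edge `f ∈ N(T')` (oriented so that `f.1 ∈ T'` and `f.2 ∉ T'`) such that the unique path in
`Γ` from `t_T(e) = y` to `t_{T'}(f) = f.2` contains no vertex of `T'`. -/
theorem exists_unique_neighbouring_edge_of_subtree
    {V : Type*} {Γ : SimpleGraph V} (hΓ : Γ.IsTree)
    {T T' : Set V} (hsub : T' ⊆ T)
    (hTfin : T.Finite) (hTconn : (Γ.induce T).Connected)
    (hT'fin : T'.Finite) (hT'conn : (Γ.induce T').Connected)
    {x y : V} (hadj : Γ.Adj x y) (hx : x ∈ T) (hy : y ∉ T) :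
    ∃! f : V × V,
      (Γ.Adj f.1 f.2 ∧ f.1 ∈ T' ∧ f.2 ∉ T') ∧
      ∀ p : Γ.Walk y f.2, p.IsPath → ∀ v ∈ p.support, v ∉ T' := by
  classical
  have hy' : y ∉ T' := fun h => hy (hsub h)
  obtain ⟨⟨t0, ht0⟩⟩ := hT'conn.nonempty
  obtain ⟨u, w, huw, hu, q, hq⟩ :=
    exists_entry_aux' (Γ := Γ) (hΓ.isConnected.preconnected y t0).some ht0 hy'
  have hw : w ∉ T' := hq w q.end_mem_support
  have hcond : (Γ.Adj (u, w).1 (u, w).2 ∧ (u, w).1 ∈ T' ∧ (u, w).2 ∉ T') ∧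
      ∀ p : Γ.Walk y (u, w).2, p.IsPath → ∀ v ∈ p.support, v ∉ T' := by
    refine ⟨⟨huw, hu, hw⟩, ?_⟩
    intro r hr v hv
    have hrq : r = (q.toPath : Γ.Path y w).val := by
      have := hΓ.2.path_unique ⟨r, hr⟩ q.toPath
      exact congrArg Subtype.val this
    rw [hrq] at hv
    exact hq v (q.support_toPath_subset hv)
  exact ⟨(u, w), hcond, fun g hg => entry_edge_unique_aux hΓ hT'conn hy' g (u, w) hg hcond⟩
end

section
/- Assume additionally that the norm map N : 𝒪_E^× → 𝒪_F^× is surjective (this holds, for example, when E/F is unramified). Then every g ∈ GL₂(F) with det(g) ∈ 𝒪_F^× can be written as g = h·s where h ∈ GL₂(F) fixes z under the Möbius action and s ∈ SL₂(F); that is, G⁰ = G⁰_z · SL₂(F), where G⁰ := {g ∈ GL₂(F) : det(g) ∈ 𝒪_F^×} and G⁰_z is the stabilizer of z in G⁰. -/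
/-- Let `F` be a finite extension of `ℚ_p` and `E = F(z)` a quadratic
extension generated by `z` with `z² = t·z − n`. Assume the norm map
`N : 𝒪_E^× → 𝒪_F^×` is surjective. Then every `g ∈ GL₂(F)` whose determinant is a unit of
`𝒪_F` factors as `g = h·s` with `h` fixing `z` under the Möbius action and `s ∈ SL₂(F)`;
that is, `G⁰ = G⁰_z · SL₂(F)`. -/
theorem G0_eq_stabilizer_mul_SL2
    (p : ℕ) [Fact p.Prime]
    (F : Type*) [NormedField F] [Algebra ℚ_[p] F] [FiniteDimensional ℚ_[p] F]
    (hQpF : ∀ x : ℚ_[p], ‖algebraMap ℚ_[p] F x‖ = ‖x‖)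
    (hnaF : ∀ x y : F, ‖x + y‖ ≤ max ‖x‖ ‖y‖)
    (E : Type*) [NormedField E] [Algebra F E]
    (hFE : ∀ x : F, ‖algebraMap F E x‖ = ‖x‖)
    (hnaE : ∀ x y : E, ‖x + y‖ ≤ max ‖x‖ ‖y‖)
    (hdim : Module.finrank F E = 2)
    (z : E) (hz : z ∉ Set.range (algebraMap F E)) (t n : F)
    (hquad : z ^ 2 = algebraMap F E t * z - algebraMap F E n)
    (hNsurj : ∀ a : F, ‖a‖ = 1 → ∃ x : E, ‖x‖ = 1 ∧ Algebra.norm F x = a) :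
    ∀ g : (Matrix (Fin 2) (Fin 2) F)ˣ, ‖Matrix.det (g : Matrix (Fin 2) (Fin 2) F)‖ = 1 →
      ∃ h s : (Matrix (Fin 2) (Fin 2) F)ˣ,
        FixesMoebius z h ∧ Matrix.det (s : Matrix (Fin 2) (Fin 2) F) = 1 ∧ g = h * s := by
  intro g hg
  obtain ⟨x, hx1, hxnorm⟩ := hNsurj _ hg
  -- `(z, 1)` is a basis of `E` over `F`
  have hli : LinearIndependent F ![z, (1 : E)] := by
    rw [LinearIndependent.pair_iff]
    intro a b hab
    by_cases ha : a = 0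
    · subst ha
      rw [zero_smul, zero_add, smul_eq_zero] at hab
      rcases hab with h | h
      · exact ⟨rfl, h⟩
      · exact absurd h one_ne_zero
    · exfalso
      apply hz
      refine ⟨a⁻¹ * (-b), ?_⟩
      have h1 : a • z = -(b • (1 : E)) := eq_neg_of_add_eq_zero_left hab
      calc algebraMap F E (a⁻¹ * (-b)) = (a⁻¹ * (-b)) • (1 : E) :=
            Algebra.algebraMap_eq_smul_one _
        _ = a⁻¹ • ((-b) • (1 : E)) := by rw [smul_smul]
        _ = a⁻¹ • (a • z) := by rw [neg_smul, ← h1]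
        _ = z := by rw [smul_smul, inv_mul_cancel₀ ha, one_smul]
  have hcard : Fintype.card (Fin 2) = Module.finrank F E := by simp [hdim]
  set b : Module.Basis (Fin 2) F E := basisOfLinearIndependentOfCardEqFinrank hli hcard with hb
  have hb0 : b 0 = z := by
    rw [hb, coe_basisOfLinearIndependentOfCardEqFinrank]; rfl
  have hb1 : b 1 = 1 := by
    rw [hb, coe_basisOfLinearIndependentOfCardEqFinrank]; rfl
  set v : F := b.repr x 0 with hv
  set u : F := b.repr x 1 with hu
  have hx : x = v • z + u • (1 : E) := by
    conv_lhs => rw [← b.sum_repr x]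
    rw [Fin.sum_univ_two, hb0, hb1]
  have hrz : b.repr z = Finsupp.single 0 1 := by rw [← hb0, b.repr_self]
  have hr1 : b.repr (1 : E) = Finsupp.single 1 1 := by rw [← hb1, b.repr_self]
  -- the candidate matrix
  set M : Matrix (Fin 2) (Fin 2) F := !![u + v * t, -(v * n); v, u] with hM
  have hxz : x * z = (u + v * t) • z + (-(v * n)) • (1 : E) := by
    rw [hx]
    simp only [Algebra.smul_def, map_add, map_mul, map_neg, mul_one]
    linear_combination algebraMap F E v * hquad
  have hxo : x * 1 = v • z + u • (1 : E) := by rw [mul_one, hx]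
  -- norm of x equals det M
  have hdet : Matrix.det M = Algebra.norm F x := by
    rw [Algebra.norm_eq_matrix_det b x]
    have hLM : Algebra.leftMulMatrix b x = !![u + v * t, v; -(v * n), u] := by
      ext i j
      rw [Algebra.leftMulMatrix_eq_repr_mul]
      fin_cases j <;> fin_cases i <;>
        simp [hb0, hb1, hxz, hxo, hrz, hr1, Finsupp.single_apply]
    rw [hLM, hM, Matrix.det_fin_two_of, Matrix.det_fin_two_of]
    ring
  have hdetg : Matrix.det M = Matrix.det (g : Matrix (Fin 2) (Fin 2) F) := by
    rw [hdet, hxnorm]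
  have hgne : Matrix.det (g : Matrix (Fin 2) (Fin 2) F) ≠ 0 := by
    intro h0; rw [h0, norm_zero] at hg; exact one_ne_zero hg.symm
  have hMunit : IsUnit M := by
    rw [Matrix.isUnit_iff_isUnit_det, hdetg]
    exact Ne.isUnit hgne
  set h : (Matrix (Fin 2) (Fin 2) F)ˣ := hMunit.unit with hh
  have hhval : (h : Matrix (Fin 2) (Fin 2) F) = M := hMunit.unit_spec
  refine ⟨h, h⁻¹ * g, ?_, ?_, ?_⟩
  · unfold FixesMoebius
    rw [hhval, hM]
    simp only [Matrix.cons_val', Matrix.cons_val_zero, Matrix.cons_val_one, Matrix.head_cons,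
      Matrix.empty_val', Matrix.cons_val_fin_one, Matrix.head_fin_const, Matrix.of_apply]
    simp only [map_add, map_mul, map_neg]
    linear_combination (-(algebraMap F E v)) * hquad
  · have hsplit : Matrix.det ((h : Matrix (Fin 2) (Fin 2) F)) *
        Matrix.det ((↑(h⁻¹ * g) : Matrix (Fin 2) (Fin 2) F)) =
        Matrix.det (g : Matrix (Fin 2) (Fin 2) F) := by
      rw [← Matrix.det_mul, ← Units.val_mul, mul_inv_cancel_left]
    rw [hhval, hdetg] at hsplit
    exact mul_left_cancel₀ hgne (by rw [hsplit, mul_one])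
  · rw [mul_inv_cancel_left]
end

section
/- Let ϖ := p^{−1/(p−1)} ∈ ℝ_{>0} and let r be a real number with 0 < r < ϖ/p. Then every element u ∈ A with ‖u − 1‖ ≤ r has a p-th root in A^{××} := {v ∈ A : ‖v − 1‖ < 1}, i.e. there exists v ∈ A with ‖v − 1‖ < 1 and v^p = u. -/
/-!
Write the sought root as `1 + w`. By the binomial theorem `(1 + w) ^ p = u` reads
`p w = (u - 1) - ∑_{2 ≤ k ≤ p} C(p, k) w ^ k`, i.e. `w` is a fixed point of
`T w = p⁻¹ ((u - 1) - ∑_{2 ≤ k ≤ p} C(p, k) w ^ k)`. For `k < p` the coefficient `C(p, k)` is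
divisible by `p`, which pays for the factor `p⁻¹`; only the top term `w ^ p` is not, and it is
the constraint `p s ^ (p - 1) < 1`, i.e. `s < ϖ`, that makes `T` a contraction of the closed ball
of radius `s = p r` into itself. Banach's fixed point theorem then produces `w`.
-/

open Finset NNReal

theorem pow_lt_inv_of_lt_rpow_neg_inv {x s : ℝ} (hx : 0 < x) (hs : 0 ≤ s) {n : ℕ} (hn : n ≠ 0)
    (hsx : s < x ^ (-1 / (n : ℝ))) : s ^ n < x⁻¹ :=
  calc s ^ n < (x ^ (-1 / (n : ℝ))) ^ n := pow_lt_pow_left₀ hsx hs hn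
    _ = x⁻¹ := by
      rw [← Real.rpow_natCast, ← Real.rpow_mul hx.le, div_mul_cancel₀ _ (Nat.cast_ne_zero.2 hn),
        Real.rpow_neg_one]

theorem norm_natCast_choose_le {K : Type*} [SeminormedRing K] [NormOneClass K]
    [IsUltrametricDist K] {p k : ℕ} (hp : p.Prime) (hk : k ≠ 0) (hkp : k < p) :
    ‖(p.choose k : K)‖ ≤ ‖(p : K)‖ := by
  obtain ⟨m, hm⟩ := hp.dvd_choose_self hk hkp
  rw [hm, Nat.cast_mul]
  exact (norm_mul_le _ _).trans
    (mul_le_of_le_one_right (norm_nonneg _) (IsUltrametricDist.norm_natCast_le_one K m))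

theorem IsUltrametricDist.norm_pow_sub_pow_le {R : Type*} [NormedCommRing R] [NormOneClass R]
    [IsUltrametricDist R] {a b : R} {s : ℝ} (ha : ‖a‖ ≤ s) (hb : ‖b‖ ≤ s) (k : ℕ) :
    ‖a ^ k - b ^ k‖ ≤ s ^ (k - 1) * ‖a - b‖ := by
  have hs : 0 ≤ s := (norm_nonneg a).trans ha
  rw [← geom_sum₂_mul]
  refine (norm_mul_le _ _).trans (mul_le_mul_of_nonneg_right ?_ (norm_nonneg _))
  refine norm_sum_le_of_forall_le_of_nonneg (by positivity) fun i hi => ?_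
  have hi : i ≤ k - 1 := Nat.le_sub_one_of_lt (mem_range.1 hi)
  calc ‖a ^ i * b ^ (k - 1 - i)‖ ≤ ‖a‖ ^ i * ‖b‖ ^ (k - 1 - i) :=
        (norm_mul_le _ _).trans (mul_le_mul (_root_.norm_pow_le _ _) (_root_.norm_pow_le _ _)
          (norm_nonneg _) (by positivity))
    _ ≤ s ^ i * s ^ (k - 1 - i) := by gcongr
    _ = s ^ (k - 1) := by rw [← pow_add, Nat.add_sub_cancel' hi]

theorem IsUltrametricDist.exists_norm_le_isFixedPt {E : Type*} [NormedAddCommGroup E]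
    [IsUltrametricDist E] [CompleteSpace E] {T : E → E} {c : ℝ≥0} (hc : c < 1) {s : ℝ}
    (hT0 : ‖T 0‖ ≤ s) (hT : ∀ x y, ‖x‖ ≤ s → ‖y‖ ≤ s → ‖T x - T y‖ ≤ c * ‖x - y‖) :
    ∃ w, ‖w‖ ≤ s ∧ Function.IsFixedPt T w := by
  have hs : 0 ≤ s := (norm_nonneg _).trans hT0
  have hmaps : Set.MapsTo T (Metric.closedBall 0 s) (Metric.closedBall 0 s) := by
    intro x hx
    rw [mem_closedBall_zero_iff] at hx ⊢
    have hTx : ‖T x - T 0‖ ≤ s :=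
      calc ‖T x - T 0‖ ≤ c * ‖x - 0‖ := hT x 0 hx (norm_zero.trans_le hs)
        _ ≤ 1 * s := by rw [sub_zero]; gcongr; exact hc.le
        _ = s := one_mul s
    simpa using (norm_add_le_max (T x - T 0) (T 0)).trans (max_le hTx hT0)
  have hcontr : ContractingWith c (hmaps.restrict T _ _) := by
    refine ⟨hc, LipschitzWith.of_dist_le_mul fun ⟨x, hx⟩ ⟨y, hy⟩ => ?_⟩
    rw [mem_closedBall_zero_iff] at hx hy
    simpa [Subtype.dist_eq, dist_eq_norm] using hT x y hx hy
  obtain ⟨w, hw, hfix, -⟩ := hcontr.exists_fixedPoint' Metric.isClosed_closedBall.isComplete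
    hmaps (Metric.mem_closedBall_self hs) (edist_ne_top _ _)
  exact ⟨w, mem_closedBall_zero_iff.1 hw, hfix⟩

section BinomTail

variable {R : Type*}

def binomTail [CommSemiring R] (p : ℕ) (w : R) : R :=
  ∑ k ∈ Ico 2 (p + 1), p.choose k • w ^ k

theorem binomTail_zero [CommSemiring R] (p : ℕ) : binomTail p (0 : R) = 0 :=
  sum_eq_zero fun k hk => by rw [zero_pow (by grind), smul_zero]

theorem one_add_pow_eq_add_binomTail [CommSemiring R] (p : ℕ) (w : R) :
    (1 + w) ^ p = 1 + p • w + binomTail p w := by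
  rcases Nat.eq_zero_or_pos p with rfl | hp
  · simp [binomTail]
  rw [add_comm 1 w, add_pow, ← sum_range_add_sum_Ico _ (by omega : 2 ≤ p + 1), binomTail]
  simp [sum_range_succ, nsmul_eq_mul, mul_comm]

theorem norm_binomTail_sub_le (K : Type*) [NormedField K] [IsUltrametricDist K] [NormedCommRing R]
    [NormOneClass R] [NormedAlgebra K R] [IsUltrametricDist R] {p : ℕ} (hp : p.Prime) {s : ℝ}
    (hs1 : s ≤ 1) {w₁ w₂ : R} (h₁ : ‖w₁‖ ≤ s) (h₂ : ‖w₂‖ ≤ s) :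
    ‖binomTail p w₁ - binomTail p w₂‖ ≤ max (‖(p : K)‖ * s) (s ^ (p - 1)) * ‖w₁ - w₂‖ := by
  have hs : 0 ≤ s := (norm_nonneg _).trans h₁
  simp only [binomTail, ← sum_sub_distrib, ← smul_sub]
  refine IsUltrametricDist.norm_sum_le_of_forall_le_of_nonneg (by positivity) fun k hk => ?_
  obtain ⟨hk2, hkp⟩ := mem_Ico.1 hk
  have hpow := IsUltrametricDist.norm_pow_sub_pow_le h₁ h₂ k
  rw [← Nat.cast_smul_eq_nsmul K, norm_smul]
  rcases (Nat.le_of_lt_succ hkp).eq_or_lt with rfl | hkp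
  · rw [Nat.choose_self, Nat.cast_one, norm_one, one_mul]
    exact hpow.trans (by gcongr; exact le_max_right _ _)
  · have hsk : s ^ (k - 1) ≤ s := pow_le_of_le_one hs hs1 (by omega)
    calc ‖(p.choose k : K)‖ * ‖w₁ ^ k - w₂ ^ k‖ ≤ ‖(p : K)‖ * (s ^ (k - 1) * ‖w₁ - w₂‖) := by
          gcongr
          exact norm_natCast_choose_le hp (by omega) hkp
      _ ≤ ‖(p : K)‖ * s * ‖w₁ - w₂‖ := by rw [mul_assoc]; gcongr
      _ ≤ _ := by gcongr; exact le_max_left _ _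

end BinomTail
theorem exists_one_add_pow_eq {K A : Type*} [NormedField K] [IsUltrametricDist K]
    [NormedCommRing A] [NormOneClass A] [NormedAlgebra K A] [IsUltrametricDist A] [CompleteSpace A]
    {p : ℕ} (hp : p.Prime) {s : ℝ} (hs : 0 ≤ s) (hsp : s ^ (p - 1) < ‖(p : K)‖) {u : A}
    (hu : ‖u - 1‖ ≤ ‖(p : K)‖ * s) :
    ∃ w : A, ‖w‖ ≤ s ∧ (1 + w) ^ p = u := by
  have hpK : 0 < ‖(p : K)‖ := (pow_nonneg hs _).trans_lt hsp
  have hs1 : s < 1 := (pow_lt_one_iff_of_nonneg hs (by have := hp.two_le; omega)).1 <|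
    hsp.trans_le (IsUltrametricDist.norm_natCast_le_one K p)
  set T : A → A := fun w => (p : K)⁻¹ • (u - 1 - binomTail p w)
  have hT0 : ‖T 0‖ ≤ s := by
    rw [norm_smul, binomTail_zero, sub_zero, norm_inv, inv_mul_le_iff₀ hpK]
    exact hu
  let c : ℝ≥0 := ⟨‖(p : K)‖⁻¹ * max (‖(p : K)‖ * s) (s ^ (p - 1)), by positivity⟩
  have hc_coe : (c : ℝ) = ‖(p : K)‖⁻¹ * max (‖(p : K)‖ * s) (s ^ (p - 1)) := rfl
  have hc : c < 1 := by
    rw [← NNReal.coe_lt_one, hc_coe, inv_mul_lt_one₀ hpK]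
    exact max_lt (mul_lt_of_lt_one_right hpK hs1) hsp
  have hT x y (hx : ‖x‖ ≤ s) (hy : ‖y‖ ≤ s) : ‖T x - T y‖ ≤ c * ‖x - y‖ := by
    rw [← smul_sub, sub_sub_sub_cancel_left, norm_smul, norm_inv, hc_coe, mul_assoc,
      norm_sub_rev x]
    gcongr
    exact norm_binomTail_sub_le K hp hs1.le hy hx
  obtain ⟨w, hw, hfix⟩ := IsUltrametricDist.exists_norm_le_isFixedPt hc hT0 hT
  have hpw : p • w = u - 1 - binomTail p w := by
    calc p • w = (p : K) • T w := by rw [hfix.eq, Nat.cast_smul_eq_nsmul]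
      _ = _ := smul_inv_smul₀ (norm_pos_iff.1 hpK) _
  exact ⟨w, hw, by rw [one_add_pow_eq_add_binomTail, hpw]; abel⟩

theorem pth_root_of_small_unit_general
    {p : ℕ} (hp : p.Prime)
    {K : Type*} [NormedField K]
    (hpK : ‖(p : K)‖ = (p : ℝ)⁻¹)
    (hnaK : ∀ x y : K, ‖x + y‖ ≤ max ‖x‖ ‖y‖)
    {A : Type*} [NormedCommRing A] [NormOneClass A] [CompleteSpace A] [NormedAlgebra K A]
    (hnaA : ∀ x y : A, ‖x + y‖ ≤ max ‖x‖ ‖y‖)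
    (r : ℝ)
    (hr : r < (p : ℝ) ^ (-(1 : ℝ) / ((p : ℝ) - 1)) / (p : ℝ))
    (u : A) (hu : ‖u - 1‖ ≤ r) :
    ∃ v : A, ‖v - 1‖ < 1 ∧ v ^ p = u := by
  have : IsUltrametricDist K := .isUltrametricDist_of_isNonarchimedean_norm hnaK
  have : IsUltrametricDist A := .isUltrametricDist_of_isNonarchimedean_norm hnaA
  have hp0 : (0 : ℝ) < p := by exact_mod_cast hp.pos
  have hpr : 0 ≤ p * r := mul_nonneg hp0.le ((norm_nonneg _).trans hu)
  have hpred : p - 1 ≠ 0 := by have := hp.two_le; omega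
  have hprϖ : (p * r) ^ (p - 1) < (p : ℝ)⁻¹ := by
    refine pow_lt_inv_of_lt_rpow_neg_inv hp0 hpr hpred ?_
    rwa [Nat.cast_pred hp.pos, ← lt_div_iff₀' hp0]
  obtain ⟨w, hw, hwu⟩ := exists_one_add_pow_eq hp hpr (hpK ▸ hprϖ)
    (by rwa [hpK, inv_mul_cancel_left₀ hp0.ne'])
  have hpr1 : p * r < 1 := (pow_lt_one_iff_of_nonneg hpr hpred).1 <|
    hprϖ.trans (inv_lt_one_of_one_lt₀ (by exact_mod_cast hp.one_lt))
  exact ⟨1 + w, by rw [add_sub_cancel_left]; exact hw.trans_lt hpr1, hwu⟩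

/-- Let `K` be a field complete with respect to a nonarchimedean absolute
value with `‖p‖ = 1/p`, and let `A` be a commutative unital `K`-Banach algebra with
nonarchimedean norm. Let `ϖ := p^{−1/(p−1)}` and let `0 < r < ϖ/p`. Then every `u ∈ A` with
`‖u − 1‖ ≤ r` has a `p`-th root in `A^{××} = {v : ‖v − 1‖ < 1}`. -/
theorem pth_root_of_small_unit
    {p : ℕ} (hp : p.Prime)
    {K : Type*} [NormedField K] [CompleteSpace K]
    (hpK : ‖(p : K)‖ = (p : ℝ)⁻¹)
    (hnaK : ∀ x y : K, ‖x + y‖ ≤ max ‖x‖ ‖y‖)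
    {A : Type*} [NormedCommRing A] [NormOneClass A] [CompleteSpace A] [NormedAlgebra K A]
    (hnaA : ∀ x y : A, ‖x + y‖ ≤ max ‖x‖ ‖y‖)
    (hsmul : ∀ (l : K) (x : A), ‖l • x‖ = ‖l‖ * ‖x‖)
    (r : ℝ) (hr0 : 0 < r)
    (hr : r < (p : ℝ) ^ (-(1 : ℝ) / ((p : ℝ) - 1)) / (p : ℝ))
    (u : A) (hu : ‖u - 1‖ ≤ r) :
    ∃ v : A, ‖v - 1‖ < 1 ∧ v ^ p = u :=
  pth_root_of_small_unit_general hp hpK hnaK hnaA r hr u hu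
end
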